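/- arXiv:1301.2942 — 4 statements merged into one kernel-verified Lean document; each statement's English description precedes it below -/
import Mathlib

section
/- Let n ≥ 2. Every multiplier σ of G(n) is similar to σ_λ for some family λ = (λ_{i,jk}) of elements of 𝕋 indexed by 1 ≤ i ≤ k and 1 ≤ j < k ≤ n; that is, there exist such λ and a map β : G(n) → 𝕋 with σ_λ(r,s) = β(r)β(s)β(rs)⁻¹σ(r,s) for all r, s ∈ G(n). -/
/-!
Let `E = 𝕋 ×_σ G(n)` be the central extension defined by `σ`, and `A_i = (1, u_i)` the lifts of
the generators. Commutators `⁅A_j, A_k⁆` lie over the centre of `G(n)`, so the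
`λ_{i,jk} = ⁅A_i, ⁅A_j, A_k⁆⁆` are scalars, subject to the Jacobi identity
`λ_{k,ij} = λ_{i,jk}⁻¹ λ_{j,ik}`. Lift `r` to the normal-form word
`S(r) = ∏_{k = n, …, 1} (∏_j ⁅A_j, A_k⁆ ^ r_{jk}) A_k ^ r_k`. Collecting `S(r) A_m` back into
normal form produces exactly the scalar `σ_λ(r, u_m)`. As `σ_λ` is a multiplier, the `s` with
`S(r) S(s) = σ_λ(r, s) S(rs)` for all `r` form a subgroup; it contains the generators `u_m`, so
it is all of `G(n)`, and comparing `𝕋`-coordinates gives `σ_λ(r, s) = β(r) β(s) β(rs)⁻¹ σ(r, s)`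
with `β(r)` the `𝕋`-coordinate of `S(r)`.
-/

open scoped BigOperators

namespace FreeNilp

/-- Index set for pairs `(j,k)` with `j < k`. -/
abbrev PairIdx (n : ℕ) : Type := {p : Fin n × Fin n // p.1 < p.2}

/-- The free nilpotent group of class 2 and rank `n`, realized on
`ℤ^n × ℤ^{n(n-1)/2}`. -/
@[ext] structure G (n : ℕ) where
  u : Fin n → ℤ
  v : PairIdx n → ℤ

namespace G

instance (n : ℕ) : Group (G n) where
  mul r s := ⟨fun i => r.u i + s.u i, fun p => r.v p + s.v p + r.u p.1.1 * s.u p.1.2⟩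
  one := ⟨fun _ => 0, fun _ => 0⟩
  inv r := ⟨fun i => -r.u i, fun p => -r.v p + r.u p.1.1 * r.u p.1.2⟩
  mul_assoc r s t := by
    refine G.ext ?_ ?_ <;> funext x
    · show (r.u x + s.u x) + t.u x = r.u x + (s.u x + t.u x)
      ring
    · show (r.v x + s.v x + r.u x.1.1 * s.u x.1.2) + t.v x +
          (r.u x.1.1 + s.u x.1.1) * t.u x.1.2 =
        r.v x + (s.v x + t.v x + s.u x.1.1 * t.u x.1.2) +
          r.u x.1.1 * (s.u x.1.2 + t.u x.1.2)
      ring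
  one_mul r := by
    refine G.ext ?_ ?_ <;> funext x
    · show 0 + r.u x = r.u x
      ring
    · show 0 + r.v x + 0 * r.u x.1.2 = r.v x
      ring
  mul_one r := by
    refine G.ext ?_ ?_ <;> funext x
    · show r.u x + 0 = r.u x
      ring
    · show r.v x + 0 + r.u x.1.1 * 0 = r.v x
      ring
  inv_mul_cancel r := by
    refine G.ext ?_ ?_ <;> funext x
    · show -r.u x + r.u x = 0
      ring
    · show (-r.v x + r.u x.1.1 * r.u x.1.2) + r.v x + -r.u x.1.1 * r.u x.1.2 = 0
      ring

@[simp] lemma mul_u {n : ℕ} (r s : G n) (i : Fin n) : (r * s).u i = r.u i + s.u i := rfl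
@[simp] lemma mul_v {n : ℕ} (r s : G n) (p : PairIdx n) :
    (r * s).v p = r.v p + s.v p + r.u p.1.1 * s.u p.1.2 := rfl
@[simp] lemma one_u {n : ℕ} (i : Fin n) : (1 : G n).u i = 0 := rfl
@[simp] lemma one_v {n : ℕ} (p : PairIdx n) : (1 : G n).v p = 0 := rfl
@[simp] lemma inv_u {n : ℕ} (r : G n) (i : Fin n) : (r⁻¹).u i = -r.u i := rfl
@[simp] lemma inv_v {n : ℕ} (r : G n) (p : PairIdx n) :
    (r⁻¹).v p = -r.v p + r.u p.1.1 * r.u p.1.2 := rfl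

end G

/-- First-block coordinate `r_i`. -/
def uc {n : ℕ} (r : G n) (i : Fin n) : ℤ := r.u i

/-- Second-block coordinate `r_{jk}` (zero unless `j < k`). -/
def vc {n : ℕ} (r : G n) (j k : Fin n) : ℤ := if h : j < k then r.v ⟨(j, k), h⟩ else 0

/-- A multiplier (2-cocycle with values in the circle group) of a group. -/
def IsMultiplier {Γ : Type*} [Group Γ] (σ : Γ → Γ → Circle) : Prop :=
  (∀ r s t : Γ, σ r s * σ (r * s) t = σ r (s * t) * σ s t) ∧
  ∀ r : Γ, σ r 1 = 1 ∧ σ 1 r = 1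

/-- Similarity (cohomology) of multipliers. -/
def Similar {Γ : Type*} [Group Γ] (σ τ : Γ → Γ → Circle) : Prop :=
  ∃ β : Γ → Circle, ∀ r s : Γ, τ r s = β r * β s * (β (r * s))⁻¹ * σ r s

/-- The subgroup `H(n) ≅ ℤⁿ` of `G n`: only the coordinates `r_n` and `r_{jn}` may
be nonzero. -/
def Hsub (n : ℕ) : Subgroup (G n) where
  carrier := {r | (∀ i : Fin n, (i : ℕ) + 1 < n → r.u i = 0) ∧
                  ∀ p : PairIdx n, (p.1.2 : ℕ) + 1 < n → r.v p = 0}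
  one_mem' := ⟨fun _ _ => rfl, fun _ _ => rfl⟩
  mul_mem' := by
    rintro r s ⟨hr1, hr2⟩ ⟨hs1, hs2⟩
    refine ⟨fun i hi => ?_, fun p hp => ?_⟩
    · simp [hr1 i hi, hs1 i hi]
    · simp [hr2 p hp, hs2 p hp, hs1 p.1.2 hp]
  inv_mem' := by
    rintro r ⟨hr1, hr2⟩
    refine ⟨fun i hi => ?_, fun p hp => ?_⟩
    · simp [hr1 i hi]
    · simp [hr2 p hp, hr1 p.1.2 hp]

/-- The subgroup `G(n-1)` of `G n`: the coordinates `r_n` and `r_{jn}` vanish. -/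
def Gsub (n : ℕ) : Subgroup (G n) where
  carrier := {r | (∀ i : Fin n, (i : ℕ) + 1 = n → r.u i = 0) ∧
                  ∀ p : PairIdx n, (p.1.2 : ℕ) + 1 = n → r.v p = 0}
  one_mem' := ⟨fun _ _ => rfl, fun _ _ => rfl⟩
  mul_mem' := by
    rintro r s ⟨hr1, hr2⟩ ⟨hs1, hs2⟩
    refine ⟨fun i hi => ?_, fun p hp => ?_⟩
    · simp [hr1 i hi, hs1 i hi]
    · simp [hr2 p hp, hs2 p hp, hs1 p.1.2 hp]
  inv_mem' := by
    rintro r ⟨hr1, hr2⟩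
    refine ⟨fun i hi => ?_, fun p hp => ?_⟩
    · simp [hr1 i hi]
    · simp [hr2 p hp, hr1 p.1.2 hp]

lemma mem_Hsub_iff {n : ℕ} {r : G n} :
    r ∈ Hsub n ↔ (∀ i : Fin n, (i : ℕ) + 1 < n → r.u i = 0) ∧
      ∀ p : PairIdx n, (p.1.2 : ℕ) + 1 < n → r.v p = 0 := Iff.rfl

lemma mem_Gsub_iff {n : ℕ} {r : G n} :
    r ∈ Gsub n ↔ (∀ i : Fin n, (i : ℕ) + 1 = n → r.u i = 0) ∧
      ∀ p : PairIdx n, (p.1.2 : ℕ) + 1 = n → r.v p = 0 := Iff.rfl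

/-- `H(n)` is a normal subgroup; conjugation preserves it. -/
lemma conj_mem_Hsub {n : ℕ} (s : G n) {a : G n} (ha : a ∈ Hsub n) :
    s * a * s⁻¹ ∈ Hsub n := by
  obtain ⟨ha1, ha2⟩ := ha
  refine ⟨fun i hi => ?_, fun p hp => ?_⟩
  · simp [ha1 i hi]
  · have hj : (p.1.1 : ℕ) + 1 < n := by
      have h2 : (p.1.1 : ℕ) < (p.1.2 : ℕ) := p.2
      omega
    simp [ha2 p hp, ha1 p.1.2 hp, ha1 p.1.1 hj]

/-- The action `α_b(a) = b a b⁻¹` of `G(n-1)` on `H(n)`. -/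
def conjH {n : ℕ} (b : Gsub n) (a : Hsub n) : Hsub n :=
  ⟨(b : G n) * (a : G n) * (b : G n)⁻¹, conj_mem_Hsub _ a.2⟩

/-- The `H(n)`-part of the unique factorization `r = a·b`, `a ∈ H(n)`, `b ∈ G(n-1)`. -/
def hpart {n : ℕ} (r : G n) : Hsub n :=
  ⟨⟨fun i => if (i : ℕ) + 1 = n then r.u i else 0,
    fun p => if (p.1.2 : ℕ) + 1 = n then r.v p else 0⟩, by
    refine ⟨fun i hi => ?_, fun p hp => ?_⟩
    · exact if_neg (by omega)
    · exact if_neg (by omega)⟩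

/-- The `G(n-1)`-part of the unique factorization `r = a·b`. -/
def gpart {n : ℕ} (r : G n) : Gsub n :=
  ⟨⟨fun i => if (i : ℕ) + 1 = n then 0 else r.u i,
    fun p => if (p.1.2 : ℕ) + 1 = n then 0 else r.v p⟩, by
    refine ⟨fun i hi => ?_, fun p hp => ?_⟩
    · exact if_pos hi
    · exact if_pos hp⟩

/-- `r` indeed factors as `hpart r * gpart r`. -/
lemma hpart_mul_gpart {n : ℕ} (r : G n) : ((hpart r : G n)) * (gpart r : G n) = r := by
  refine G.ext ?_ ?_ <;> funext x
  · show (if ((x : ℕ)) + 1 = n then r.u x else 0) + (if (x : ℕ) + 1 = n then 0 else r.u x) = r.u x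
    split <;> ring
  · show (if ((x.1.2 : ℕ)) + 1 = n then r.v x else 0) +
      (if (x.1.2 : ℕ) + 1 = n then 0 else r.v x) +
      (if ((x.1.1 : ℕ)) + 1 = n then r.u x.1.1 else 0) *
        (if (x.1.2 : ℕ) + 1 = n then 0 else r.u x.1.2) = r.v x
    have h2 : (x.1.1 : ℕ) < (x.1.2 : ℕ) := x.2
    have h3 : (x.1.2 : ℕ) < n := x.1.2.isLt
    rcases eq_or_ne ((x.1.2 : ℕ) + 1) n with h | h
    · rw [if_pos h, if_pos h, if_pos h, if_neg (by omega)]; ring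
    · rw [if_neg h, if_neg h, if_neg h, if_neg (show ¬((x.1.1 : ℕ) + 1 = n) by omega)]
      ring

/-- An admissible pair `(σ_H, g)` (Mackey data with trivial multiplier on `G(n-1)`). -/
structure AdmissiblePair (n : ℕ) (σH : Hsub n → Hsub n → Circle)
    (g : Hsub n → Gsub n → Circle) : Prop where
  multH : IsMultiplier σH
  g_one_right : ∀ a : Hsub n, g a 1 = 1
  g_one_left : ∀ b : Gsub n, g 1 b = 1
  g_add : ∀ (a a' : Hsub n) (b : Gsub n),
    g (a * a') b = σH (conjH b a) (conjH b a') * (σH a a')⁻¹ * (g a b * g a' b)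
  g_mul : ∀ (a : Hsub n) (b b' : Gsub n), g a (b * b') = g (conjH b' a) b * g a b'

/-- An admissible triple `(σ_H, g, σ')`. -/
def AdmissibleTriple (n : ℕ) (σH : Hsub n → Hsub n → Circle)
    (g : Hsub n → Gsub n → Circle) (σ' : Gsub n → Gsub n → Circle) : Prop :=
  AdmissiblePair n σH g ∧ IsMultiplier σ'

/-- The map `σ_n(a′b, ab′) = σ_H(a′, α_b(a)) g(a,b) σ′(b,b′)` defined via the unique
factorizations. -/
noncomputable def sigmaN {n : ℕ} (σH : Hsub n → Hsub n → Circle) (g : Hsub n → Gsub n → Circle)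
    (σ' : Gsub n → Gsub n → Circle) (r s : G n) : Circle :=
  σH (hpart r) (conjH (gpart r) (hpart s)) * g (hpart s) (gpart r) *
    σ' (gpart r) (gpart s)

/-- The map `τ(a′b, ab′) = σ_H(a′, α_b(a)) g(a,b)` defined via the unique factorizations. -/
noncomputable def tauN {n : ℕ} (σH : Hsub n → Hsub n → Circle) (g : Hsub n → Gsub n → Circle)
    (r s : G n) : Circle :=
  σH (hpart r) (conjH (gpart r) (hpart s)) * g (hpart s) (gpart r)

/-- The generator `u_i`. -/
def uE {n : ℕ} (i : Fin n) : G n := ⟨fun j => if j = i then 1 else 0, fun _ => 0⟩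

/-- The generator `v_{jk}`. -/
def vE {n : ℕ} (j k : Fin n) : G n := ⟨fun _ => 0, fun p => if p.1 = (j, k) then 1 else 0⟩

/-- The last index `n` (i.e. `n-1` in `Fin n`). -/
def lastI (n : ℕ) (hn : 0 < n) : Fin n := ⟨n - 1, by omega⟩

/-- `u_n` as an element of `H(n)`. -/
def unH {n : ℕ} (hn : 0 < n) : Hsub n :=
  ⟨uE (lastI n hn), by
    refine ⟨fun i hi => ?_, fun p hp => rfl⟩
    have h : i ≠ lastI n hn := by
      intro h; apply absurd hi; rw [h]; show ¬ (n - 1) + 1 < n; omega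
    simp [uE, h]⟩

/-- `u_i` (for `i < n`) as an element of `G(n-1)`. -/
def uiG {n : ℕ} (i : Fin n) (hi : (i : ℕ) + 1 < n) : Gsub n :=
  ⟨uE i, by
    refine ⟨fun j hj => ?_, fun p hp => rfl⟩
    have h : j ≠ i := by intro h; rw [h] at hj; omega
    simp [uE, h]⟩

/-- `v_{in}` (for `i < n`) as an element of `H(n)`. -/
def vinH {n : ℕ} (i : Fin n) (hi : (i : ℕ) + 1 < n) : Hsub n :=
  ⟨vE i (lastI n (by omega)), by
    refine ⟨fun j hj => rfl, fun p hp => ?_⟩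
    have h : p.1 ≠ (i, lastI n (by omega)) := by
      intro h
      have h2 : (p.1.2 : ℕ) = n - 1 := by rw [h]; rfl
      omega
    simp [vE, h]⟩

/-- `v_{ij}` (for `j < n`) as an element of `G(n-1)`. -/
def vijG {n : ℕ} (i j : Fin n) (hj : (j : ℕ) + 1 < n) : Gsub n :=
  ⟨vE i j, by
    refine ⟨fun k hk => rfl, fun p hp => ?_⟩
    have h : p.1 ≠ (i, j) := by
      intro h
      have h2 : (p.1.2 : ℕ) = (j : ℕ) := by rw [h]
      omega
    simp [vE, h]⟩

/-- The "word part" `w(a)` of `a ∈ H(n)`. -/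
def wH {n : ℕ} (a : Hsub n) : Hsub n :=
  ⟨⟨(a : G n).u, fun _ => 0⟩,
    ⟨fun i hi => (mem_Hsub_iff.mp a.2).1 i hi, fun _ _ => rfl⟩⟩

/-- The "central part" `z(a)` of `a ∈ H(n)`. -/
def zH {n : ℕ} (a : Hsub n) : Hsub n :=
  ⟨⟨fun _ => 0, (a : G n).v⟩,
    ⟨fun _ _ => rfl, fun p hp => (mem_Hsub_iff.mp a.2).2 p hp⟩⟩

/-- The "word part" `w(b)` of `b ∈ G(n-1)`. -/
def wG {n : ℕ} (b : Gsub n) : Gsub n :=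
  ⟨⟨(b : G n).u, fun _ => 0⟩,
    ⟨fun i hi => (mem_Gsub_iff.mp b.2).1 i hi, fun _ _ => rfl⟩⟩

/-- The "central part" `z(b)` of `b ∈ G(n-1)`. -/
def zG {n : ℕ} (b : Gsub n) : Gsub n :=
  ⟨⟨fun _ => 0, (b : G n).v⟩,
    ⟨fun _ _ => rfl, fun p hp => (mem_Gsub_iff.mp b.2).2 p hp⟩⟩

/-- `g(v_{in}, u_j)`, as a total function (equal to `1` outside the admissible range). -/
noncomputable def gvu {n : ℕ} (g : Hsub n → Gsub n → Circle) (i j : Fin n) : Circle :=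
  if h : (i : ℕ) + 1 < n ∧ (j : ℕ) + 1 < n then g (vinH i h.1) (uiG j h.2) else 1

/-- `g(u_n, v_{ij})`, as a total function (equal to `1` outside the admissible range). -/
noncomputable def guv {n : ℕ} (g : Hsub n → Gsub n → Circle) (i j : Fin n) : Circle :=
  if h : (j : ℕ) + 1 < n then g (unH (by omega)) (vijG i j h) else 1

/-- A normalized pair `(σ_H, g)`: admissible, with `σ_H` of the standard `λ`-form, and
`g(u_n, u_i) = 1` for all `1 ≤ i ≤ n-1`. -/
def Normalized {n : ℕ} (hn : 0 < n) (σH : Hsub n → Hsub n → Circle)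
    (g : Hsub n → Gsub n → Circle) (lam : Fin n → Circle) : Prop :=
  AdmissiblePair n σH g ∧
  (∀ a' a : Hsub n, σH a' a =
    ∏ i ∈ Finset.univ.filter (fun i : Fin n => (i : ℕ) + 1 < n),
      lam i ^ (uc (a' : G n) (lastI n hn) * vc (a : G n) i (lastI n hn))) ∧
  ∀ (i : Fin n) (hi : (i : ℕ) + 1 < n), g (unH hn) (uiG i hi) = 1

/-- The multiplier `σ_λ` of `G n` attached to a family of parameters
`λ_{i,jk} ∈ 𝕋` (`1 ≤ i ≤ k`, `1 ≤ j < k ≤ n`). -/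
noncomputable def sigmaLam {n : ℕ} (lam : Fin n → Fin n → Fin n → Circle) (r s : G n) : Circle :=
  (∏ t ∈ Finset.univ.filter
      (fun t : Fin n × Fin n × Fin n => t.1 < t.2.1 ∧ t.2.1 < t.2.2),
    lam t.1 t.2.1 t.2.2 ^ (vc s t.2.1 t.2.2 * uc r t.1 + uc s t.2.2 * vc r t.1 t.2.1) *
    lam t.2.1 t.1 t.2.2 ^ (vc s t.1 t.2.2 * uc r t.2.1 +
      uc s t.2.2 * (uc r t.1 * uc r t.2.1 - vc r t.1 t.2.1))) *
  ∏ p ∈ Finset.univ.filter (fun p : Fin n × Fin n => p.1 < p.2),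
    lam p.1 p.1 p.2 ^ (vc s p.1 p.2 * uc r p.1 +
      uc s p.2 * (uc r p.1 * (uc r p.1 - 1) / 2)) *
    lam p.2 p.1 p.2 ^ (uc r p.2 * (vc s p.1 p.2 + uc r p.1 * uc s p.2) +
      uc r p.1 * (uc s p.2 * (uc s p.2 - 1) / 2))

/-- The extension of the parameter family to indices `i > k`, via
`λ_{k,ij} = λ_{i,jk}⁻¹ λ_{j,ik}` for `i < j < k`. -/
noncomputable def lamExt {n : ℕ} (lam : Fin n → Fin n → Fin n → Circle) (i j k : Fin n) : Circle :=
  if i ≤ k then lam i j k else (lam j k i)⁻¹ * lam k j i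

open scoped commutatorElement

lemma mul_pred_div_two_add (x y : ℤ) :
    (x + y) * (x + y - 1) / 2 = x * (x - 1) / 2 + y * (y - 1) / 2 + x * y := by
  obtain ⟨a, ha⟩ := Int.even_mul_pred_self x
  obtain ⟨b, hb⟩ := Int.even_mul_pred_self y
  rw [show (x + y) * (x + y - 1) = (a + b + x * y) + (a + b + x * y) by
      linear_combination ha + hb, ha, hb]
  omega

lemma mul_pred_div_two_sub_one (x : ℤ) :
    (x - 1) * (x - 1 - 1) / 2 = x * (x - 1) / 2 - (x - 1) := by
  have h := mul_pred_div_two_add x (-1)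
  rw [← sub_eq_add_neg] at h
  rw [h]; norm_num; ring

namespace IsMultiplier

variable {Γ : Type*} [Group Γ] {σ : Γ → Γ → Circle}

lemma cocycle (h : IsMultiplier σ) (r s t : Γ) : σ r s * σ (r * s) t = σ r (s * t) * σ s t :=
  h.1 r s t

lemma map_one_right (h : IsMultiplier σ) (r : Γ) : σ r 1 = 1 := (h.2 r).1

lemma map_one_left (h : IsMultiplier σ) (r : Γ) : σ 1 r = 1 := (h.2 r).2

lemma map_inv_self (h : IsMultiplier σ) (r : Γ) : σ r⁻¹ r = σ r r⁻¹ := by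
  simpa [h.map_one_left, h.map_one_right] using (h.cocycle r r⁻¹ r).symm

end IsMultiplier

section PartialProducts

variable {M : Type*} [Monoid M] {n : ℕ}

/-- `prodAsc f k = f 0 * f 1 * ⋯ * f (k - 1)`, where indices `≥ n` contribute `1`. -/
def prodAsc (f : Fin n → M) : ℕ → M
  | 0 => 1
  | k + 1 => prodAsc f k * if h : k < n then f ⟨k, h⟩ else 1

/-- `prodDesc f k = f (k - 1) * ⋯ * f 1 * f 0`, where indices `≥ n` contribute `1`. -/
def prodDesc (f : Fin n → M) : ℕ → M
  | 0 => 1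
  | k + 1 => (if h : k < n then f ⟨k, h⟩ else 1) * prodDesc f k

variable {f g : Fin n → M}

@[simp] lemma prodAsc_zero : prodAsc f 0 = 1 := rfl

@[simp] lemma prodDesc_zero : prodDesc f 0 = 1 := rfl

lemma prodAsc_succ {k : ℕ} (h : k < n) : prodAsc f (k + 1) = prodAsc f k * f ⟨k, h⟩ := by
  rw [prodAsc, dif_pos h]

lemma prodDesc_succ {k : ℕ} (h : k < n) : prodDesc f (k + 1) = f ⟨k, h⟩ * prodDesc f k := by
  rw [prodDesc, dif_pos h]

lemma prodAsc_congr {k : ℕ} (h : ∀ j : Fin n, j.val < k → f j = g j) :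
    prodAsc f k = prodAsc g k := by
  induction k with
  | zero => rfl
  | succ k ih =>
    rw [prodAsc, prodAsc, ih fun j hj => h j (by omega)]
    split_ifs with hk
    · rw [h _ (by simp)]
    · rfl

lemma prodDesc_congr {k : ℕ} (h : ∀ j : Fin n, j.val < k → f j = g j) :
    prodDesc f k = prodDesc g k := by
  induction k with
  | zero => rfl
  | succ k ih =>
    rw [prodDesc, prodDesc, ih fun j hj => h j (by omega)]
    split_ifs with hk
    · rw [h _ (by simp)]
    · rfl

lemma prodAsc_eq_one (h : ∀ j, f j = 1) (k : ℕ) : prodAsc f k = 1 := by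
  induction k with
  | zero => rfl
  | succ k ih => rw [prodAsc, ih, one_mul]; split_ifs <;> simp [h]

lemma prodDesc_eq_one (h : ∀ j, f j = 1) (k : ℕ) : prodDesc f k = 1 := by
  induction k with
  | zero => rfl
  | succ k ih => rw [prodDesc, ih, mul_one]; split_ifs <;> simp [h]

lemma prodAsc_eq_of_le {k t : ℕ} (h : ∀ j : Fin n, k ≤ j.val → f j = 1) (ht : k ≤ t) :
    prodAsc f t = prodAsc f k := by
  induction t, ht using Nat.le_induction with
  | base => rfl
  | succ t hkt ih =>
    rw [prodAsc, ih]
    split_ifs with htn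
    · rw [h ⟨t, htn⟩ hkt, mul_one]
    · rw [mul_one]

lemma prodDesc_ite_eq (m : Fin n) (x : M) (k : ℕ) :
    prodDesc (fun j => if j = m then x else 1) k = if m.val < k then x else 1 := by
  induction k with
  | zero => simp
  | succ k ih =>
    rw [prodDesc, ih]
    split_ifs <;> simp_all [Fin.ext_iff] <;> omega

lemma map_prodAsc {N F : Type*} [Monoid N] [FunLike F M N] [MonoidHomClass F M N] (φ : F)
    (k : ℕ) : φ (prodAsc f k) = prodAsc (fun j => φ (f j)) k := by
  induction k with
  | zero => simp
  | succ k ih => rw [prodAsc, prodAsc, map_mul, ih]; split_ifs <;> simp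

lemma map_prodDesc {N F : Type*} [Monoid N] [FunLike F M N] [MonoidHomClass F M N] (φ : F)
    (k : ℕ) : φ (prodDesc f k) = prodDesc (fun j => φ (f j)) k := by
  induction k with
  | zero => simp
  | succ k ih => rw [prodDesc, prodDesc, map_mul, ih]; split_ifs <;> simp

lemma prodAsc_mem {S : Submonoid M} (h : ∀ j, f j ∈ S) (k : ℕ) : prodAsc f k ∈ S := by
  induction k with
  | zero => exact S.one_mem
  | succ k ih => rw [prodAsc]; split_ifs <;> simp [S.mul_mem, ih, h]

lemma prodDesc_mem {S : Submonoid M} (h : ∀ j, f j ∈ S) (k : ℕ) : prodDesc f k ∈ S := by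
  induction k with
  | zero => exact S.one_mem
  | succ k ih => rw [prodDesc]; split_ifs <;> simp [S.mul_mem, ih, h]

lemma Commute.prodAsc_left {x : M} (h : ∀ j, Commute (f j) x) (k : ℕ) :
    Commute (prodAsc f k) x := by
  induction k with
  | zero => exact Commute.one_left x
  | succ k ih => rw [prodAsc]; split_ifs <;> simp [ih, ih.mul_left, h]

lemma Commute.prodAsc_prodAsc (h : ∀ i j, Commute (f i) (g j)) (k l : ℕ) :
    Commute (prodAsc f k) (prodAsc g l) :=
  Commute.prodAsc_left (fun i => (Commute.prodAsc_left (fun j => (h i j).symm) l).symm) k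

lemma prodAsc_mul_prodAsc (h : ∀ i j, Commute (g i) (f j)) (k : ℕ) :
    prodAsc f k * prodAsc g k = prodAsc (fun j => f j * g j) k := by
  induction k with
  | zero => simp
  | succ k ih =>
    rw [prodAsc, prodAsc, prodAsc, ← ih]
    split_ifs with hk
    · rw [mul_assoc, ← mul_assoc (f _), ← (Commute.prodAsc_left (fun i => h i _) k).eq]
      simp only [mul_assoc]
    · simp

lemma prodAsc_eq_prod {M : Type*} [CommMonoid M] (f : Fin n → M) (k : ℕ) :
    prodAsc f k = ∏ j with j.val < k, f j := by
  induction k with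
  | zero => simp
  | succ k ih =>
    rw [prodAsc, ih]
    split_ifs with hk
    · rw [show (Finset.univ.filter fun j : Fin n => j.val < k + 1) =
          insert ⟨k, hk⟩ (Finset.univ.filter fun j : Fin n => j.val < k) by
            ext j; simp [Fin.ext_iff]; omega,
        Finset.prod_insert (by simp), mul_comm]
    · rw [mul_one]
      refine Finset.prod_congr ?_ fun _ _ => rfl
      ext j; simp; omega

end PartialProducts

section FinsetProducts

variable {M : Type*} [CommMonoid M] {n : ℕ}

lemma prod_filter_lt_lt_eq_of_ne (f : Fin n × Fin n × Fin n → M) (m : Fin n)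
    (hf : ∀ t, t.2.2 ≠ m → f t = 1) :
    ∏ t with t.1 < t.2.1 ∧ t.2.1 < t.2.2, f t = ∏ j with j < m, ∏ i with i < j, f (i, j, m) := by
  have hk : ∀ i j, ∏ k, (if i < j ∧ j < k then f (i, j, k) else 1) =
      if i < j ∧ j < m then f (i, j, m) else 1 :=
    fun i j => Fintype.prod_eq_single m fun k hk => by simp [hf (i, j, k) hk]
  simp_rw [Finset.prod_filter, Fintype.prod_prod_type, hk]
  rw [Finset.prod_comm]
  refine Finset.prod_congr rfl fun j _ => ?_
  by_cases hj : j < m <;> simp [hj]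

lemma prod_filter_lt_eq_of_ne (f : Fin n × Fin n → M) (m : Fin n) (hf : ∀ p, p.2 ≠ m → f p = 1) :
    ∏ p with p.1 < p.2, f p = ∏ j with j < m, f (j, m) := by
  rw [Finset.prod_filter, Fintype.prod_prod_type, Finset.prod_comm,
    Fintype.prod_eq_single m (fun k hk => Finset.prod_eq_one fun j _ => by simp [hf (j, k) hk]),
    Finset.prod_filter]

end FinsetProducts

section CentralExtension

variable {Γ : Type*} [Group Γ]

@[ext] structure CentralExt (σ : Γ → Γ → Circle) where
  c : Circle
  g : Γ

namespace CentralExt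

section Group

variable (σ : Γ → Γ → Circle) [hσ : Fact (IsMultiplier σ)]

noncomputable instance : Group (CentralExt σ) where
  mul x y := ⟨x.c * y.c * σ x.g y.g, x.g * y.g⟩
  one := ⟨1, 1⟩
  inv x := ⟨(x.c * σ x.g x.g⁻¹)⁻¹, x.g⁻¹⟩
  mul_assoc x y z := by
    refine CentralExt.ext ?_ (mul_assoc x.g y.g z.g)
    show x.c * y.c * σ x.g y.g * z.c * σ (x.g * y.g) z.g =
      x.c * (y.c * z.c * σ y.g z.g) * σ x.g (y.g * z.g)
    calc _ = x.c * y.c * z.c * (σ x.g y.g * σ (x.g * y.g) z.g) := by ac_rfl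
      _ = _ := by rw [hσ.out.cocycle]; ac_rfl
  one_mul x := CentralExt.ext (by
    show 1 * x.c * σ 1 x.g = x.c; rw [hσ.out.map_one_left, one_mul, mul_one]) (one_mul x.g)
  mul_one x := CentralExt.ext (by
    show x.c * 1 * σ x.g 1 = x.c; rw [hσ.out.map_one_right, mul_one, mul_one]) (mul_one x.g)
  inv_mul_cancel x := CentralExt.ext (by
    show (x.c * σ x.g x.g⁻¹)⁻¹ * x.c * σ x.g⁻¹ x.g = 1
    rw [hσ.out.map_inv_self]; group) (inv_mul_cancel x.g)

lemma mul_c (x y : CentralExt σ) : (x * y).c = x.c * y.c * σ x.g y.g := rfl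

noncomputable def proj : CentralExt σ →* Γ where
  toFun := CentralExt.g
  map_one' := rfl
  map_mul' _ _ := rfl

noncomputable def incl : Circle →* CentralExt σ where
  toFun a := ⟨a, 1⟩
  map_one' := rfl
  map_mul' a b := CentralExt.ext (by
    show a * b = a * b * σ 1 1; rw [hσ.out.map_one_left, mul_one]) (mul_one 1).symm

lemma proj_apply (x : CentralExt σ) : proj σ x = x.g := rfl

lemma incl_apply (a : Circle) : incl σ a = ⟨a, 1⟩ := rfl

lemma incl_commute (a : Circle) (x : CentralExt σ) : Commute (incl σ a) x :=
  CentralExt.ext (by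
    show a * x.c * σ 1 x.g = x.c * a * σ x.g 1
    rw [hσ.out.map_one_left, hσ.out.map_one_right, mul_comm a])
    ((one_mul x.g).trans (mul_one x.g).symm)

lemma incl_mul_incl_mul (a b : Circle) (x : CentralExt σ) :
    incl σ a * (incl σ b * x) = incl σ (a * b) * x := by
  rw [← mul_assoc, ← map_mul]

lemma similar_of_section {τ : Γ → Γ → Circle} (S : Γ → CentralExt σ) (hS : ∀ r, (S r).g = r)
    (h : ∀ r s, S r * S s = incl σ (τ r s) * S (r * s)) : Similar σ τ := by
  refine ⟨fun r => (S r).c, fun r s => ?_⟩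
  have hc := congrArg CentralExt.c (h r s)
  rw [mul_c, mul_c, hS, hS, hS, incl_apply, hσ.out.map_one_left, mul_one] at hc
  change (S r).c * (S s).c * σ r s = τ r s * (S (r * s)).c at hc
  change τ r s = (S r).c * (S s).c * ((S (r * s)).c)⁻¹ * σ r s
  rw [eq_mul_inv_of_mul_eq hc.symm, mul_right_comm _ (σ r s)]

end Group

variable {σ : Γ → Γ → Circle} [Fact (IsMultiplier σ)]

lemma incl_mul_left_comm (a : Circle) (x y : CentralExt σ) :
    x * (incl σ a * y) = incl σ a * (x * y) :=
  ((incl_commute σ a x).left_comm y).symm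

def CommuteUpTo (x y : CentralExt σ) (a : Circle) : Prop := x * y = incl σ a * (y * x)

lemma commuteUpTo_iff_commutatorElement {x y : CentralExt σ} {a : Circle} :
    CommuteUpTo x y a ↔ ⁅x, y⁆ = incl σ a := by
  rw [CommuteUpTo, commutatorElement_def, mul_inv_eq_iff_eq_mul, mul_inv_eq_iff_eq_mul,
    mul_assoc]

lemma commuteUpTo_iff_conj {x y : CentralExt σ} {a : Circle} :
    CommuteUpTo x y a ↔ x * y * x⁻¹ = incl σ a * y := by
  rw [CommuteUpTo, mul_inv_eq_iff_eq_mul, mul_assoc]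

lemma commuteUpTo_one_iff {x y : CentralExt σ} : CommuteUpTo x y 1 ↔ Commute x y := by
  rw [CommuteUpTo, map_one, one_mul]; rfl

lemma commuteUpTo_commutatorElement_c {x y : CentralExt σ} (h : Commute x.g y.g) :
    CommuteUpTo x y ⁅x, y⁆.c := by
  rw [commuteUpTo_iff_commutatorElement]
  refine CentralExt.ext rfl ?_
  rw [← proj_apply, map_commutatorElement, proj_apply, proj_apply,
    commutatorElement_eq_one_iff_commute.mpr h]; rfl

namespace CommuteUpTo

variable {x y z w : CentralExt σ} {a b : Circle}

lemma mul_mul_eq (h : CommuteUpTo x y a) (t : CentralExt σ) :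
    x * (y * t) = incl σ a * (y * (x * t)) := by
  rw [← mul_assoc, h, mul_assoc, mul_assoc]

lemma symm (h : CommuteUpTo x y a) : CommuteUpTo y x a⁻¹ := by
  rw [CommuteUpTo, h, incl_mul_incl_mul, inv_mul_cancel, map_one, one_mul]

lemma mul_left (hx : CommuteUpTo x z a) (hy : CommuteUpTo y z b) :
    CommuteUpTo (x * y) z (a * b) := by
  rw [CommuteUpTo, mul_assoc, hy, incl_mul_left_comm, ← mul_assoc x z, hx]
  simp only [mul_assoc, incl_mul_incl_mul, mul_comm b a]

lemma mul_right (hy : CommuteUpTo x y a) (hz : CommuteUpTo x z b) :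
    CommuteUpTo x (y * z) (a * b) := by
  simpa only [mul_inv_rev, inv_inv, mul_comm a] using (hy.symm.mul_left hz.symm).symm

lemma inv_left (h : CommuteUpTo x y a) : CommuteUpTo x⁻¹ y a⁻¹ := by
  rw [commuteUpTo_iff_commutatorElement] at h ⊢
  rw [show ⁅x⁻¹, y⁆ = x⁻¹ * ⁅x, y⁆⁻¹ * x by group, h, ← map_inv,
    ← (incl_commute σ a⁻¹ x⁻¹).eq, inv_mul_cancel_right]

lemma inv_right (h : CommuteUpTo x y a) : CommuteUpTo x y⁻¹ a⁻¹ := by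
  simpa using h.symm.inv_left.symm

lemma zpow_right (h : CommuteUpTo x y a) (m : ℤ) : CommuteUpTo x (y ^ m) (a ^ m) := by
  induction m using Int.induction_on with
  | zero => simp [CommuteUpTo]
  | succ i ih => rw [zpow_add_one, zpow_add_one]; exact ih.mul_right h
  | pred i ih => rw [zpow_sub_one, zpow_sub_one]; exact ih.mul_right h.inv_right

lemma zpow_left (h : CommuteUpTo x y a) (m : ℤ) : CommuteUpTo (x ^ m) y (a ^ m) := by
  simpa using (h.symm.zpow_right m).symm

lemma zpow_zpow (h : CommuteUpTo x y a) (e m : ℤ) :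
    CommuteUpTo (x ^ e) (y ^ m) (a ^ (e * m)) := by
  simpa only [zpow_mul, mul_comm e m] using (h.zpow_right m).zpow_left e

lemma commute_commutatorElement (hx : CommuteUpTo x w a) (hy : CommuteUpTo y w b) :
    Commute ⁅x, y⁆ w := by
  rw [← commuteUpTo_one_iff, commutatorElement_def,
    show (1 : Circle) = a * b * a⁻¹ * b⁻¹ by
      rw [mul_right_comm a, mul_inv_cancel, one_mul, mul_inv_cancel]]
  exact ((hx.mul_left hy).mul_left hx.inv_left).mul_left hy.inv_left

lemma zpow_mul_eq (hxy : x * y = z * (y * x)) (hz : CommuteUpTo x z a) (e : ℤ) :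
    x ^ e * y = incl σ (a ^ (e * (e - 1) / 2)) * (z ^ e * (y * x ^ e)) := by
  have hstep : ∀ t, x * (y * t) = z * (y * (x * t)) := fun t => by
    rw [← mul_assoc, hxy, mul_assoc, mul_assoc]
  have hstep_inv : ∀ t, x⁻¹ * (y * t) = incl σ a * (z⁻¹ * (y * (x⁻¹ * t))) := fun t => by
    have h : x⁻¹ * y = incl σ a * (z⁻¹ * (y * x⁻¹)) := by
      calc x⁻¹ * y = x⁻¹ * z⁻¹ * (x * y) * x⁻¹ := by rw [hxy]; group
        _ = incl σ a * (z⁻¹ * (y * x⁻¹)) := by rw [hz.inv_left.inv_right, inv_inv]; group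
    rw [← mul_assoc, h, mul_assoc, mul_assoc, mul_assoc]
  let P : ℤ → Prop := fun k =>
    x ^ k * y = incl σ (a ^ (k * (k - 1) / 2)) * (z ^ k * (y * x ^ k))
  have hsucc : ∀ k, P k → P (k + 1) := by
    intro k ih
    simp only [P] at ih ⊢
    rw [zpow_add_one z, zpow_add_one x, ← (Commute.self_zpow x k).eq, mul_assoc, ih,
      incl_mul_left_comm, (hz.zpow_right k).mul_mul_eq, hstep, incl_mul_incl_mul,
      mul_pred_div_two_add]
    simp [zpow_add, mul_assoc]
  have hpred : ∀ k, P k → P (k - 1) := by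
    intro k ih
    simp only [P] at ih ⊢
    rw [zpow_sub_one z, zpow_sub_one x, ((Commute.refl x).inv_right.zpow_left k).eq, mul_assoc,
      ih, incl_mul_left_comm, (hz.inv_left.zpow_right k).mul_mul_eq, hstep_inv,
      incl_mul_incl_mul, incl_mul_left_comm, incl_mul_incl_mul, ← mul_assoc (z ^ k),
      mul_pred_div_two_sub_one, inv_zpow', ← zpow_add, ← zpow_add_one]
    congr 3
    ring
  induction e using Int.induction_on with
  | zero => simp
  | succ e ih => exact hsucc _ ih
  | pred e ih => exact hpred _ ih

lemma prodAsc_right {n : ℕ} {f : Fin n → CentralExt σ} {α : Fin n → Circle}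
    (h : ∀ j, CommuteUpTo x (f j) (α j)) (k : ℕ) :
    CommuteUpTo x (prodAsc f k) (prodAsc α k) := by
  induction k with
  | zero => simp [CommuteUpTo]
  | succ k ih =>
    rw [prodAsc, prodAsc]
    split_ifs
    · exact ih.mul_right (h _)
    · simpa using ih

lemma prodAsc_left {n : ℕ} {f : Fin n → CentralExt σ} {α : Fin n → Circle}
    (h : ∀ j, CommuteUpTo (f j) w (α j)) (k : ℕ) :
    CommuteUpTo (prodAsc f k) w (prodAsc α k) := by
  induction k with
  | zero => simp [CommuteUpTo]
  | succ k ih =>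
    rw [prodAsc, prodAsc]
    split_ifs
    · exact ih.mul_left (h _)
    · simpa using ih

end CommuteUpTo

lemma commutatorElement_mul_mul {p q x y : CentralExt σ} {a b : Circle} (hpq : Commute p q)
    (hp : Commute p ⁅x, y⁆) (hq : Commute q ⁅x, y⁆) (hxq : CommuteUpTo x q a)
    (hyp : CommuteUpTo y p b) : ⁅p * x, q * y⁆ = incl σ (a * b⁻¹) * ⁅x, y⁆ := by
  have hxy : x * y = ⁅x, y⁆ * (y * x) := by rw [commutatorElement_def]; group
  have key : p * x * (q * y) = incl σ (a * b⁻¹) * ⁅x, y⁆ * (q * y * (p * x)) := by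
    rw [mul_assoc, ← mul_assoc x, hxq]
    simp only [mul_assoc]
    rw [incl_mul_left_comm, hxy, hq.left_comm, hp.left_comm, hpq.left_comm,
      hyp.symm.mul_mul_eq, incl_mul_left_comm b⁻¹ q, incl_mul_left_comm b⁻¹, incl_mul_incl_mul]
  rw [show ⁅p * x, q * y⁆ = p * x * (q * y) * (q * y * (p * x))⁻¹ by group, key,
    mul_inv_cancel_right]

def SectionLaw (S : Γ → CentralExt σ) (τ : Γ → Γ → Circle) (s : Γ) : Prop :=
  ∀ r, S r * S s = incl σ (τ r s) * S (r * s)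

namespace SectionLaw

variable {S : Γ → CentralExt σ} {τ : Γ → Γ → Circle} {s t : Γ}

lemma mul (hτ : IsMultiplier τ) (hs : SectionLaw S τ s) (ht : SectionLaw S τ t) :
    SectionLaw S τ (s * t) := by
  intro r
  have hst : S (s * t) = incl σ (τ s t)⁻¹ * (S s * S t) := by
    rw [ht s, incl_mul_incl_mul, inv_mul_cancel, map_one, one_mul]
  calc S r * S (s * t) = incl σ (τ s t)⁻¹ * (S r * S s * S t) := by
        rw [hst, incl_mul_left_comm, mul_assoc]
    _ = incl σ ((τ s t)⁻¹ * τ r s * τ (r * s) t) * S (r * s * t) := by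
        rw [hs r, mul_assoc, ht (r * s), incl_mul_incl_mul, incl_mul_incl_mul]
    _ = incl σ (τ r (s * t)) * S (r * (s * t)) := by
        rw [mul_assoc _ (τ r s), hτ.cocycle, mul_comm (τ r (s * t)), inv_mul_cancel_left,
          mul_assoc]

lemma inv (hS : S 1 = 1) (hτ : IsMultiplier τ) (hs : SectionLaw S τ s) :
    SectionLaw S τ s⁻¹ := by
  intro r
  have hcoc : τ (r * s⁻¹) s * τ r s⁻¹ = τ s⁻¹ s := by
    simpa [hτ.map_one_right, hτ.map_inv_self] using hτ.cocycle (r * s⁻¹) s s⁻¹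
  have h1 : S s⁻¹ = incl σ (τ s⁻¹ s) * (S s)⁻¹ := by
    rw [eq_mul_inv_iff_mul_eq, hs, inv_mul_cancel, hS, mul_one]
  have h2 : S r * (S s)⁻¹ = incl σ (τ (r * s⁻¹) s)⁻¹ * S (r * s⁻¹) := by
    rw [mul_inv_eq_iff_eq_mul, mul_assoc, hs, incl_mul_incl_mul, inv_mul_cancel, map_one,
      one_mul, inv_mul_cancel_right]
  rw [h1, incl_mul_left_comm, h2, incl_mul_incl_mul, ← hcoc, mul_right_comm,
    mul_inv_cancel, one_mul]

end SectionLaw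

lemma sectionLaw_of_closure_eq_top {X : Set Γ} (hX : Subgroup.closure X = ⊤)
    {S : Γ → CentralExt σ} (hS : S 1 = 1) {τ : Γ → Γ → Circle} (hτ : IsMultiplier τ)
    (hgen : ∀ x ∈ X, SectionLaw S τ x) (s : Γ) : SectionLaw S τ s := by
  have hs : s ∈ Subgroup.closure X := hX ▸ Subgroup.mem_top s
  induction hs using Subgroup.closure_induction with
  | mem x hx => exact hgen x hx
  | one => intro r; rw [hS, mul_one, mul_one, hτ.map_one_right, map_one, one_mul]
  | mul x y _ _ hx hy => exact hx.mul hτ hy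
  | inv x _ hx => exact hx.inv hS hτ

end CentralExt

end CentralExtension

section Coordinates

variable {n : ℕ}

lemma G.zpow_eq (r : G n) (m : ℤ) : r ^ m =
    ⟨fun i => m * r.u i, fun p => m * r.v p + m * (m - 1) / 2 * (r.u p.1.1 * r.u p.1.2)⟩ := by
  let P : ℤ → Prop := fun k => r ^ k =
    ⟨fun i => k * r.u i, fun p => k * r.v p + k * (k - 1) / 2 * (r.u p.1.1 * r.u p.1.2)⟩
  have key : ∀ k, P k → P (k + 1) ∧ P (k - 1) := by
    intro k ih
    simp only [P] at ih ⊢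
    rw [zpow_add_one, zpow_sub_one, ih, mul_pred_div_two_add, mul_pred_div_two_sub_one]
    constructor <;> refine G.ext (funext fun i => ?_) (funext fun p => ?_) <;>
      simp only [G.mul_u, G.mul_v, G.inv_u, G.inv_v] <;> ring
  induction m using Int.induction_on with
  | zero => refine G.ext (funext fun i => ?_) (funext fun p => ?_) <;> simp
  | succ m ih => exact (key _ ih).1
  | pred m ih => exact (key _ ih).2

lemma G.commutatorElement_u (x y : G n) (i : Fin n) : (⁅x, y⁆ : G n).u i = 0 := by
  simp [commutatorElement_def]

lemma G.commute_of_u_eq_zero {y : G n} (hy : ∀ i, y.u i = 0) (x : G n) : Commute x y :=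
  G.ext (funext fun i => by simp [hy, add_comm]) (funext fun p => by simp [hy, add_comm])

@[simp] lemma uc_one (i : Fin n) : uc (1 : G n) i = 0 := rfl

@[simp] lemma vc_one (j k : Fin n) : vc (1 : G n) j k = 0 := by simp [vc]

lemma uc_mul (r s : G n) (i : Fin n) : uc (r * s) i = uc r i + uc s i := rfl

lemma vc_mul (r s : G n) {j k : Fin n} (h : j < k) :
    vc (r * s) j k = vc r j k + vc s j k + uc r j * uc s k := by
  simp [vc, h, uc]

lemma vc_of_not_lt (r : G n) {j k : Fin n} (h : ¬ j < k) : vc r j k = 0 := dif_neg h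

@[simp] lemma uc_uE (m i : Fin n) : uc (uE m) i = if i = m then 1 else 0 := rfl

@[simp] lemma vc_uE (m j k : Fin n) : vc (uE m) j k = 0 := by simp [vc, uE]

end Coordinates

section NormalForm

variable {E : Type*} [Group E] {n : ℕ}

def commPart (a : Fin n → E) (r : G n) (k : Fin n) : E :=
  prodAsc (fun j => ⁅a j, a k⁆ ^ vc r j k) n

def block (a : Fin n → E) (r : G n) (k : Fin n) : E := commPart a r k * a k ^ uc r k

def normalForm (a : Fin n → E) (r : G n) : E := prodDesc (block a r) n

lemma map_normalForm {F : Type*} [Group F] (φ : E →* F) (a : Fin n → E) (r : G n) :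
    φ (normalForm a r) = normalForm (fun i => φ (a i)) r := by
  simp only [normalForm, map_prodDesc, block, commPart, map_mul, map_prodAsc, map_zpow,
    map_commutatorElement]
  rfl

lemma normalForm_mem_closure (a : Fin n → E) (r : G n) :
    normalForm a r ∈ Subgroup.closure (Set.range a) := by
  have ha : ∀ i, a i ∈ Subgroup.closure (Set.range a) := fun i =>
    Subgroup.subset_closure (Set.mem_range_self i)
  refine prodDesc_mem (S := (Subgroup.closure _).toSubmonoid) (fun k => ?_) n
  refine Subgroup.mul_mem _ (prodAsc_mem (S := (Subgroup.closure _).toSubmonoid) (fun j => ?_) n)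
    (Subgroup.zpow_mem _ (ha k) _)
  rw [commutatorElement_def]
  exact Subgroup.zpow_mem _ (mul_mem (mul_mem (mul_mem (ha j) (ha k)) (inv_mem (ha j)))
    (inv_mem (ha k))) _

lemma normalForm_one (a : Fin n → E) : normalForm a 1 = 1 :=
  prodDesc_eq_one (fun k => by simp [block, commPart, prodAsc_eq_one]) n

lemma normalForm_uE (a : Fin n → E) (m : Fin n) : normalForm a (uE m) = a m := by
  have hblock : block a (uE m) = fun k => if k = m then a m else 1 := by
    funext k
    by_cases hk : k = m <;> simp [block, commPart, prodAsc_eq_one, hk]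
  rw [normalForm, hblock, prodDesc_ite_eq, if_pos m.isLt]

lemma block_mul_uE_of_ne (a : Fin n → E) (r : G n) {m k : Fin n} (hk : k ≠ m) :
    block a (r * uE m) k = block a r k := by
  have hv : ∀ j, vc (r * uE m) j k = vc r j k := fun j => by
    by_cases hj : j < k
    · simp [vc_mul _ _ hj, hk]
    · simp [vc_of_not_lt _ hj]
  simp [block, commPart, hv, uc_mul, hk]

end NormalForm

section Generation

variable {n : ℕ}

lemma commutatorElement_uE_zpow_vc (r : G n) (j k : Fin n) : ⁅(uE j : G n), uE k⁆ ^ vc r j k =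
    ⟨fun _ => 0, fun p => if p.1 = (j, k) then vc r j k else 0⟩ := by
  by_cases hjk : j < k
  · rw [G.zpow_eq]
    refine G.ext (funext fun i => ?_) (funext fun p => ?_)
    · simp [commutatorElement_def, uE]
    · obtain ⟨⟨a, b⟩, hab⟩ := p
      simp only [commutatorElement_def, uE, G.mul_v, G.mul_u, G.inv_v, G.inv_u]
      have : a < b := hab
      split_ifs <;> (simp_all; try omega)
  · rw [vc_of_not_lt r hjk, zpow_zero]
    refine G.ext rfl (funext fun p => ?_)
    simp

lemma commPart_uE (r : G n) (k : Fin n) :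
    commPart uE r k = ⟨fun _ => 0, fun p => if p.1.2 = k then r.v p else 0⟩ := by
  have key : ∀ t ≤ n, prodAsc (fun j => ⁅(uE j : G n), uE k⁆ ^ vc r j k) t =
      ⟨fun _ => 0, fun p => if p.1.2 = k ∧ p.1.1.val < t then r.v p else 0⟩ := by
    intro t ht
    induction t with
    | zero => simp; rfl
    | succ t ih =>
      rw [prodAsc_succ (by omega), ih (by omega), commutatorElement_uE_zpow_vc]
      refine G.ext (funext fun i => ?_) (funext fun p => ?_)
      · simp
      · rcases p with ⟨⟨⟨a, ha⟩, b⟩, hab⟩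
        dsimp only at hab
        simp only [G.mul_v, Prod.mk.injEq, mul_zero, add_zero]
        by_cases hb : b = k
        · subst hb
          by_cases hat : a = t
          · subst hat
            simp [vc, hab]
          · simp only [true_and, Fin.mk.injEq, hat, false_and, if_false, add_zero]
            split_ifs <;> first | rfl | omega
        · simp [hb]
  rw [commPart, key n le_rfl]
  refine G.ext rfl (funext fun p => ?_)
  simp

lemma block_uE (r : G n) (k : Fin n) : block uE r k =
    ⟨fun i => if i = k then r.u i else 0, fun p => if p.1.2 = k then r.v p else 0⟩ := by
  rw [block, commPart_uE, G.zpow_eq]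
  refine G.ext (funext fun i => ?_) (funext fun p => ?_)
  · by_cases hi : i = k <;> simp [uE, uc, hi]
  · rcases p with ⟨⟨a, b⟩, hab⟩
    dsimp only at hab
    simp only [uE, G.mul_v]
    split_ifs with h1 h2
    · subst h1 h2
      exact absurd hab (lt_irrefl _)
    all_goals simp

lemma normalForm_uE_self (r : G n) : normalForm uE r = r := by
  have key : ∀ t ≤ n, prodDesc (block uE r) t =
      ⟨fun i => if i.val < t then r.u i else 0, fun p => if p.1.2.val < t then r.v p else 0⟩ := by
    intro t ht
    induction t with
    | zero => refine G.ext (funext fun i => ?_) (funext fun p => ?_) <;> simp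
    | succ t ih =>
      rw [prodDesc_succ (by omega), ih (by omega), block_uE]
      refine G.ext (funext fun i => ?_) (funext fun p => ?_)
      · simp only [G.mul_u, Fin.ext_iff]
        split_ifs <;> omega
      · rcases p with ⟨⟨a, b⟩, hab⟩
        have hab' : a.val < b.val := hab
        simp only [G.mul_v, Fin.ext_iff]
        split_ifs <;> omega
  rw [normalForm, key n le_rfl]
  refine G.ext (funext fun i => ?_) (funext fun p => ?_) <;> simp

lemma closure_range_uE : Subgroup.closure (Set.range (uE : Fin n → G n)) = ⊤ :=
  eq_top_iff.mpr fun r _ => normalForm_uE_self r ▸ normalForm_mem_closure uE r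

end Generation

section SigmaLam

variable {n : ℕ} (lam : Fin n → Fin n → Fin n → Circle)

/-- The scalar collected when `A_m` is moved leftwards through the `k`-th block of the normal
form of `r`. -/
noncomputable def blockFactor (r : G n) (m k : Fin n) : Circle :=
  lam k k m ^ (uc r k * (uc r k - 1) / 2) *
    ∏ a with a < k, lam a k m ^ vc r a k * lam k a m ^ (uc r a * uc r k - vc r a k)

lemma blockFactor_eq_prodAsc (r : G n) (m k : Fin n) : blockFactor lam r m k =
    prodAsc (fun a => lam k a m ^ (uc r k * uc r a)) k * lam k k m ^ (uc r k * (uc r k - 1) / 2) *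
      prodAsc (fun j => ((lam j k m)⁻¹ * lam k j m)⁻¹ ^ vc r j k) n := by
  have hsub : ∏ j with j.val < n, ((lam j k m)⁻¹ * lam k j m)⁻¹ ^ vc r j k =
      ∏ j with j < k, ((lam j k m)⁻¹ * lam k j m)⁻¹ ^ vc r j k := by
    refine (Finset.prod_subset (fun j _ => by simp) fun j _ hj => ?_).symm
    simp only [Finset.mem_filter, Finset.mem_univ, true_and] at hj
    rw [vc_of_not_lt _ hj, zpow_zero]
  rw [prodAsc_eq_prod, prodAsc_eq_prod, hsub, mul_right_comm, blockFactor]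
  simp only [← Fin.lt_def]
  rw [← Finset.prod_mul_distrib, mul_comm]
  congr 1
  refine Finset.prod_congr rfl fun a _ => ?_
  rw [mul_inv_rev, inv_inv, mul_zpow, inv_zpow', zpow_sub, zpow_neg, mul_comm (uc r k)]
  simp only [mul_comm, mul_left_comm]

lemma sigmaLam_uE (r : G n) (m : Fin n) : sigmaLam lam r (uE m) =
    ∏ k with k < m, blockFactor lam r m k * lam m k m ^ (uc r m * uc r k) := by
  rw [sigmaLam, prod_filter_lt_lt_eq_of_ne _ m (fun t ht => by simp [ht]),
    prod_filter_lt_eq_of_ne _ m (fun p hp => by simp [hp]), ← Finset.prod_mul_distrib]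
  refine Finset.prod_congr rfl fun k _ => ?_
  simp only [blockFactor, uc_uE, vc_uE, if_true, mul_zero, zero_mul, zero_add, add_zero, one_mul,
    mul_one, sub_self, Int.zero_ediv]
  ac_rfl

lemma sigmaLam_one_right (r : G n) : sigmaLam lam r 1 = 1 := by simp [sigmaLam]

lemma sigmaLam_one_left (r : G n) : sigmaLam lam 1 r = 1 := by simp [sigmaLam]

lemma sigmaLam_cocycle (r s t : G n) :
    sigmaLam lam r s * sigmaLam lam (r * s) t = sigmaLam lam r (s * t) * sigmaLam lam s t := by
  simp only [sigmaLam]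
  rw [mul_mul_mul_comm, ← Finset.prod_mul_distrib, ← Finset.prod_mul_distrib,
    mul_mul_mul_comm (∏ x ∈ _, _), ← Finset.prod_mul_distrib, ← Finset.prod_mul_distrib]
  congr 1
  · refine Finset.prod_congr rfl fun x hx => ?_
    simp only [Finset.mem_filter, Finset.mem_univ, true_and] at hx
    rw [mul_mul_mul_comm, ← zpow_add, ← zpow_add, mul_mul_mul_comm, ← zpow_add, ← zpow_add,
      vc_mul r s hx.1, vc_mul s t hx.2, vc_mul s t (hx.1.trans hx.2)]
    simp only [uc_mul]
    congr 2 <;> ring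
  · refine Finset.prod_congr rfl fun x hx => ?_
    simp only [Finset.mem_filter, Finset.mem_univ, true_and] at hx
    rw [mul_mul_mul_comm, ← zpow_add, ← zpow_add, mul_mul_mul_comm, ← zpow_add, ← zpow_add,
      vc_mul s t hx]
    simp only [uc_mul, mul_pred_div_two_add]
    congr 2 <;> ring

lemma isMultiplier_sigmaLam : IsMultiplier (sigmaLam lam) :=
  ⟨sigmaLam_cocycle lam, fun r => ⟨sigmaLam_one_right lam r, sigmaLam_one_left lam r⟩⟩

end SigmaLam

namespace CentralExt

variable {n : ℕ} (σ : G n → G n → Circle) [Fact (IsMultiplier σ)]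

noncomputable def liftU (i : Fin n) : CentralExt σ := ⟨1, uE i⟩

noncomputable def liftComm (j k : Fin n) : CentralExt σ := ⁅liftU σ j, liftU σ k⁆

/-- The structure constants `λ_{i,jk} = ⁅A_i, ⁅A_j, A_k⁆⁆ ∈ 𝕋`, where `A_i = liftU σ i`. -/
noncomputable def lam (i j k : Fin n) : Circle := ⁅liftU σ i, liftComm σ j k⁆.c

lemma commuteUpTo_liftU_liftComm (i j k : Fin n) :
    CommuteUpTo (liftU σ i) (liftComm σ j k) (lam σ i j k) := by
  refine commuteUpTo_commutatorElement_c (G.commute_of_u_eq_zero (fun l => ?_) _)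
  rw [← proj_apply, liftComm, map_commutatorElement, G.commutatorElement_u]

lemma commute_liftComm (j k p q : Fin n) : Commute (liftComm σ j k) (liftComm σ p q) :=
  (commuteUpTo_liftU_liftComm σ j p q).commute_commutatorElement
    (commuteUpTo_liftU_liftComm σ k p q)

lemma lam_jacobi (a b c : Fin n) : lam σ c a b = (lam σ a b c)⁻¹ * lam σ b a c := by
  suffices h : CommuteUpTo (liftU σ c) (liftComm σ a b) ((lam σ a b c)⁻¹ * lam σ b a c) by
    rw [lam, commuteUpTo_iff_commutatorElement.mp h]; rfl
  -- Conjugation by `A_c` turns `⁅A_a, A_b⁆` into `⁅⁅A_a, A_c⁆⁻¹ A_a, ⁅A_b, A_c⁆⁻¹ A_b⁆`.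
  have hconj : ∀ w, liftU σ c * w * (liftU σ c)⁻¹ = ⁅w, liftU σ c⁆⁻¹ * w := fun w => by group
  rw [commuteUpTo_iff_conj, liftComm, ← MulAut.conj_apply, map_commutatorElement,
    MulAut.conj_apply, MulAut.conj_apply, hconj, hconj]
  simpa only [inv_inv, liftComm] using
    commutatorElement_mul_mul (commute_liftComm σ a c b c).inv_inv
    (commute_liftComm σ a c a b).inv_left (commute_liftComm σ b c a b).inv_left
    (commuteUpTo_liftU_liftComm σ a b c).inv_right (commuteUpTo_liftU_liftComm σ b a c).inv_right

noncomputable def sect (r : G n) : CentralExt σ := normalForm (liftU σ) r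

lemma sect_g (r : G n) : (sect σ r).g = r := by
  rw [← proj_apply, sect, map_normalForm]
  exact normalForm_uE_self r

lemma sect_one : sect σ 1 = 1 := normalForm_one _

lemma sect_uE (m : Fin n) : sect σ (uE m) = liftU σ m := normalForm_uE _ m

/-- The commutators `⁅A_a, A_m⁆ ^ r_a`, `a < k`, left behind by `A_m` while it moves leftwards
through the blocks `k - 1, …, 0` of `sect σ r`. -/
noncomputable def trail (r : G n) (m : Fin n) (k : ℕ) : CentralExt σ :=
  prodAsc (fun a => liftComm σ a m ^ uc r a) k

lemma block_mul_trail_mul_liftU (r : G n) (m k : Fin n) :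
    block (liftU σ) r k * (trail σ r m k * liftU σ m) =
      incl σ (blockFactor (lam σ) r m k) *
        (trail σ r m (k + 1) * (liftU σ m * block (liftU σ) r k)) := by
  set e := uc r k
  set C := commPart (liftU σ) r k
  have hAW : CommuteUpTo (liftU σ k ^ e) (trail σ r m k) _ := CommuteUpTo.prodAsc_right
    (fun a => (commuteUpTo_liftU_liftComm σ k a m).zpow_zpow e (uc r a)) k
  have hAA := (commuteUpTo_liftU_liftComm σ k k m).zpow_mul_eq (y := liftU σ m)
    (by rw [liftComm]; group) e
  have hCW : Commute C (trail σ r m (k + 1)) :=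
    Commute.prodAsc_prodAsc (fun j a => (commute_liftComm σ j k a m).zpow_zpow _ _) _ _
  have hCA : CommuteUpTo C (liftU σ m) _ := CommuteUpTo.prodAsc_left
    (fun j => (lam_jacobi σ j k m ▸ commuteUpTo_liftU_liftComm σ m j k).symm.zpow_left _) n
  have htrail : trail σ r m (k + 1) = trail σ r m k * liftComm σ k m ^ e :=
    prodAsc_succ k.isLt
  calc block (liftU σ) r k * (trail σ r m k * liftU σ m)
      = C * (liftU σ k ^ e * (trail σ r m k * liftU σ m)) := by rw [block, mul_assoc]
    _ = incl σ _ * (C * (trail σ r m (k + 1) * (liftU σ m * liftU σ k ^ e))) := by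
      rw [hAW.mul_mul_eq, hAA, incl_mul_left_comm, incl_mul_left_comm, incl_mul_left_comm,
        incl_mul_incl_mul, htrail, mul_assoc]
    _ = incl σ _ * (trail σ r m (k + 1) * (liftU σ m * block (liftU σ) r k)) := by
      rw [hCW.left_comm, hCA.mul_mul_eq, incl_mul_left_comm, incl_mul_incl_mul, block]
    _ = _ := by rw [blockFactor_eq_prodAsc]

lemma prodDesc_block_mul_liftU (r : G n) (m : Fin n) {k : ℕ} (hk : k ≤ n) :
    prodDesc (block (liftU σ) r) k * liftU σ m =
      incl σ (prodAsc (blockFactor (lam σ) r m) k) *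
        (trail σ r m k * (liftU σ m * prodDesc (block (liftU σ) r) k)) := by
  induction k with
  | zero => simp [trail]
  | succ k ih =>
    have hk' : k < n := by omega
    calc prodDesc (block (liftU σ) r) (k + 1) * liftU σ m
        = incl σ (prodAsc (blockFactor (lam σ) r m) k) *
            (block (liftU σ) r ⟨k, hk'⟩ * (trail σ r m k * liftU σ m) *
              prodDesc (block (liftU σ) r) k) := by
          rw [prodDesc_succ hk', mul_assoc, ih (by omega), incl_mul_left_comm]
          simp only [mul_assoc]
      _ = _ := by
          rw [block_mul_trail_mul_liftU σ r m ⟨k, hk'⟩, prodAsc_succ hk', prodDesc_succ hk',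
            ← incl_mul_incl_mul]
          simp only [mul_assoc]

lemma commPart_mul_trail (r : G n) (m : Fin n) :
    commPart (liftU σ) r m * trail σ r m m = commPart (liftU σ) (r * uE m) m := by
  have htrunc : ∀ s : G n, commPart (liftU σ) s m =
      prodAsc (fun j => liftComm σ j m ^ vc s j m) m := fun s =>
    prodAsc_eq_of_le (fun j hj => by rw [vc_of_not_lt _ (by omega), zpow_zero]) m.isLt.le
  rw [htrunc, htrunc, trail,
    prodAsc_mul_prodAsc (fun a j => (commute_liftComm σ a m j m).zpow_zpow _ _)]
  refine prodAsc_congr fun j hj => ?_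
  rw [← zpow_add, vc_mul _ _ (show j < m from hj)]
  simp

lemma prodDesc_block_succ_mul_liftU (r : G n) (m : Fin n) :
    prodDesc (block (liftU σ) r) (m + 1) * liftU σ m =
      incl σ (sigmaLam (lam σ) r (uE m)) * prodDesc (block (liftU σ) (r * uE m)) (m + 1) := by
  set e := uc r m
  have hAW : CommuteUpTo (liftU σ m ^ e) (trail σ r m m) _ := CommuteUpTo.prodAsc_right
    (fun a => (commuteUpTo_liftU_liftComm σ m a m).zpow_zpow e (uc r a)) m
  have hc : prodAsc (blockFactor (lam σ) r m) m *
      prodAsc (fun a => lam σ m a m ^ (e * uc r a)) m = sigmaLam (lam σ) r (uE m) := by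
    rw [sigmaLam_uE, prodAsc_eq_prod, prodAsc_eq_prod, ← Finset.prod_mul_distrib]
    rfl
  have hlow : prodDesc (block (liftU σ) r) m = prodDesc (block (liftU σ) (r * uE m)) m :=
    prodDesc_congr fun j hj => (block_mul_uE_of_ne _ r (by omega)).symm
  calc prodDesc (block (liftU σ) r) (m + 1) * liftU σ m
      = incl σ (prodAsc (blockFactor (lam σ) r m) m) * (commPart (liftU σ) r m *
          (liftU σ m ^ e * (trail σ r m m * (liftU σ m * prodDesc (block (liftU σ) r) m)))) := by
        rw [prodDesc_succ m.isLt, mul_assoc, prodDesc_block_mul_liftU σ r m m.isLt.le,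
          incl_mul_left_comm, block, mul_assoc]
    _ = incl σ (sigmaLam (lam σ) r (uE m)) * (commPart (liftU σ) r m * trail σ r m m *
          (liftU σ m ^ (e + 1) * prodDesc (block (liftU σ) r) m)) := by
        rw [hAW.mul_mul_eq, incl_mul_left_comm, incl_mul_incl_mul, ← mul_assoc (liftU σ m ^ e),
          ← zpow_add_one, hc]
        simp only [mul_assoc]
    _ = _ := by
        rw [commPart_mul_trail, prodDesc_succ m.isLt, hlow, block, uc_mul, uc_uE, if_pos rfl,
          mul_assoc]

lemma sect_mul_liftU (r : G n) (m : Fin n) :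
    sect σ r * liftU σ m = incl σ (sigmaLam (lam σ) r (uE m)) * sect σ (r * uE m) := by
  suffices h : ∀ k, m.val + 1 ≤ k → k ≤ n → prodDesc (block (liftU σ) r) k * liftU σ m =
      incl σ (sigmaLam (lam σ) r (uE m)) * prodDesc (block (liftU σ) (r * uE m)) k from
    h n m.isLt le_rfl
  intro k hk
  induction k, hk using Nat.le_induction with
  | base => exact fun _ => prodDesc_block_succ_mul_liftU σ r m
  | succ k hk ih =>
    intro hkn
    rw [prodDesc_succ (by omega), prodDesc_succ (by omega), mul_assoc, ih (by omega),
      incl_mul_left_comm, block_mul_uE_of_ne _ _ (fun h => by rw [← h] at hk; simp at hk)]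

end CentralExt

theorem every_multiplier_similar_to_sigmaLam_general (n : ℕ)
    (σ : G n → G n → Circle) (hσ : IsMultiplier σ) :
    ∃ (lam : Fin n → Fin n → Fin n → Circle) (β : G n → Circle),
      ∀ r s : G n, sigmaLam lam r s = β r * β s * (β (r * s))⁻¹ * σ r s := by
  have : Fact (IsMultiplier σ) := ⟨hσ⟩
  have hlaw (s : G n) : CentralExt.SectionLaw (CentralExt.sect σ)
      (sigmaLam (CentralExt.lam σ)) s := by
    refine CentralExt.sectionLaw_of_closure_eq_top closure_range_uE (CentralExt.sect_one σ)
      (isMultiplier_sigmaLam _) ?_ s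
    rintro _ ⟨m, rfl⟩ r
    rw [CentralExt.sect_uE]
    exact CentralExt.sect_mul_liftU σ r m
  exact ⟨CentralExt.lam σ,
    CentralExt.similar_of_section σ (CentralExt.sect σ) (CentralExt.sect_g σ) fun r s => hlaw s r⟩

/-- every multiplier of `G(n)` is similar to `σ_λ` for some family
of parameters `λ`. -/
theorem every_multiplier_similar_to_sigmaLam (n : ℕ) (hn : 2 ≤ n)
    (σ : G n → G n → Circle) (hσ : IsMultiplier σ) :
    ∃ (lam : Fin n → Fin n → Fin n → Circle) (β : G n → Circle),
      ∀ r s : G n, sigmaLam lam r s = β r * β s * (β (r * s))⁻¹ * σ r s :=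
  every_multiplier_similar_to_sigmaLam_general n σ hσ

end FreeNilp
end

section
/- Let n ≥ 2 and let λ = (λ_{i,jk}) be a family of elements of 𝕋 indexed by 1 ≤ i ≤ k and 1 ≤ j < k ≤ n. A central element s = (0, …, 0, s_{12}, s_{13}, …, s_{n−1,n}) of G(n) is σ_λ-regular if and only if ∏_{1≤j<k≤n} λ_{i,jk}^{s_{jk}} = 1 for every 1 ≤ i ≤ n. -/
open scoped BigOperators

namespace FreeNilp

lemma circle_aux (x y : Circle) (a b u v : ℤ) :
    x ^ a * y ^ b = x ^ (u * v) * y ^ (u * -v) * (x ^ a * (y ^ b * (x⁻¹ * y) ^ (v * u))) := by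
  rw [mul_zpow, inv_zpow, ← zpow_neg, mul_comm v u]
  rw [show u * -v = -(u * v) by ring]
  generalize u * v = w
  calc x ^ a * y ^ b = (x ^ w * x ^ (-w) * x ^ a) * (y ^ (-w) * y ^ w * y ^ b) := by
        simp [← zpow_add]
    _ = x ^ w * y ^ (-w) * (x ^ a * (y ^ b * (x ^ (-w) * y ^ w))) := by ac_rfl

lemma key_eq {n : ℕ} (lam : Fin n → Fin n → Fin n → Circle) (s : G n)
    (hs : ∀ i, s.u i = 0) (r : G n) :
    sigmaLam lam r s = sigmaLam lam s r *
      ∏ m : Fin n,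
        (∏ p ∈ Finset.univ.filter (fun p : Fin n × Fin n => p.1 < p.2),
          lamExt lam m p.1 p.2 ^ vc s p.1 p.2) ^ r.u m := by
  have h02 : (0 : ℤ) / 2 = 0 := by decide
  have hM : (∏ m : Fin n,
      (∏ p ∈ Finset.univ.filter (fun p : Fin n × Fin n => p.1 < p.2),
        lamExt lam m p.1 p.2 ^ vc s p.1 p.2) ^ r.u m) =
      ∏ q ∈ Finset.univ.filter (fun q : Fin n × Fin n × Fin n => q.2.1 < q.2.2),
        lamExt lam q.1 q.2.1 q.2.2 ^ (vc s q.2.1 q.2.2 * r.u q.1) := by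
    have h1 : ∀ m : Fin n,
        (∏ p ∈ Finset.univ.filter (fun p : Fin n × Fin n => p.1 < p.2),
          lamExt lam m p.1 p.2 ^ vc s p.1 p.2) ^ r.u m =
        ∏ p ∈ Finset.univ.filter (fun p : Fin n × Fin n => p.1 < p.2),
          lamExt lam m p.1 p.2 ^ (vc s p.1 p.2 * r.u m) := by
      intro m
      rw [← Finset.prod_zpow]
      exact Finset.prod_congr rfl fun p _ => (zpow_mul _ _ _).symm
    rw [Finset.prod_congr rfl (fun m _ => h1 m), ← Finset.prod_product']
    apply Finset.prod_congr
    · ext q; simp [Finset.mem_product]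
    · intros; rfl
  have hA : (∏ q ∈ Finset.univ.filter (fun q : Fin n × Fin n × Fin n => q.2.1 < q.2.2),
        lamExt lam q.1 q.2.1 q.2.2 ^ (vc s q.2.1 q.2.2 * r.u q.1)) =
      (∏ t ∈ Finset.univ.filter
          (fun t : Fin n × Fin n × Fin n => t.1 < t.2.1 ∧ t.2.1 < t.2.2),
        lam t.1 t.2.1 t.2.2 ^ (vc s t.2.1 t.2.2 * r.u t.1)) *
      ((∏ p ∈ Finset.univ.filter (fun p : Fin n × Fin n => p.1 < p.2),
          lam p.1 p.1 p.2 ^ (vc s p.1 p.2 * r.u p.1)) *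
       ((∏ t ∈ Finset.univ.filter
            (fun t : Fin n × Fin n × Fin n => t.1 < t.2.1 ∧ t.2.1 < t.2.2),
          lam t.2.1 t.1 t.2.2 ^ (vc s t.1 t.2.2 * r.u t.2.1)) *
        ((∏ p ∈ Finset.univ.filter (fun p : Fin n × Fin n => p.1 < p.2),
            lam p.2 p.1 p.2 ^ (vc s p.1 p.2 * r.u p.2)) *
         (∏ t ∈ Finset.univ.filter
              (fun t : Fin n × Fin n × Fin n => t.1 < t.2.1 ∧ t.2.1 < t.2.2),
            ((lam t.1 t.2.1 t.2.2)⁻¹ * lam t.2.1 t.1 t.2.2) ^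
              (vc s t.1 t.2.1 * r.u t.2.2))))) := by
    rw [← Finset.prod_filter_mul_prod_filter_not
      (Finset.univ.filter (fun q : Fin n × Fin n × Fin n => q.2.1 < q.2.2))
      (fun q => q.1 < q.2.1)]
    congr 1
    · refine Finset.prod_nbij' id id ?_ ?_ (fun _ _ => rfl) (fun _ _ => rfl) ?_
      · rintro ⟨m, j, k⟩ h
        simp only [Finset.mem_filter, Finset.mem_univ, true_and] at h ⊢
        exact ⟨h.2, h.1⟩
      · rintro ⟨m, j, k⟩ h
        simp only [Finset.mem_filter, Finset.mem_univ, true_and] at h ⊢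
        exact ⟨h.2, h.1⟩
      · rintro ⟨m, j, k⟩ h
        simp only [Finset.mem_filter, Finset.mem_univ, true_and] at h
        rw [lamExt, if_pos (le_of_lt (lt_trans h.2 h.1))]
        rfl
    rw [← Finset.prod_filter_mul_prod_filter_not _ (fun q => q.1 = q.2.1)]
    congr 1
    · refine Finset.prod_nbij' (fun q => q.2) (fun p => (p.1, p)) ?_ ?_ ?_ ?_ ?_
      · rintro ⟨m, j, k⟩ h
        simp only [Finset.mem_filter, Finset.mem_univ, true_and] at h ⊢
        exact h.1.1
      · rintro ⟨j, k⟩ h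
        simp only [Finset.mem_filter, Finset.mem_univ, true_and] at h ⊢
        exact ⟨⟨h, lt_irrefl _⟩, trivial⟩
      · rintro ⟨m, j, k⟩ h
        simp only [Finset.mem_filter, Finset.mem_univ, true_and] at h
        simp [h.2]
      · rintro ⟨j, k⟩ h; rfl
      · rintro ⟨m, j, k⟩ h
        simp only [Finset.mem_filter, Finset.mem_univ, true_and] at h
        obtain ⟨⟨h1, -⟩, h2⟩ := h
        subst h2
        rw [lamExt, if_pos (le_of_lt h1)]
    rw [← Finset.prod_filter_mul_prod_filter_not _ (fun q => q.1 < q.2.2)]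
    congr 1
    · refine Finset.prod_nbij' (fun q => (q.2.1, q.1, q.2.2))
        (fun t => (t.2.1, t.1, t.2.2)) ?_ ?_ ?_ ?_ ?_
      · rintro ⟨m, j, k⟩ h
        simp only [Finset.mem_filter, Finset.mem_univ, true_and, not_lt,
          Fin.lt_def, Fin.le_def, Fin.ext_iff, and_true] at h ⊢
        omega
      · rintro ⟨j, m, k⟩ h
        simp only [Finset.mem_filter, Finset.mem_univ, true_and, not_lt,
          Fin.lt_def, Fin.le_def, Fin.ext_iff, and_true] at h ⊢
        omega
      · rintro ⟨m, j, k⟩ _; rfl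
      · rintro ⟨j, m, k⟩ _; rfl
      · rintro ⟨m, j, k⟩ h
        simp only [Finset.mem_filter, Finset.mem_univ, true_and] at h
        rw [lamExt, if_pos (le_of_lt h.2)]
        try rfl
    rw [← Finset.prod_filter_mul_prod_filter_not _ (fun q => q.1 = q.2.2)]
    congr 1
    · refine Finset.prod_nbij' (fun q => q.2) (fun p => (p.2, p)) ?_ ?_ ?_ ?_ ?_
      · rintro ⟨m, j, k⟩ h
        simp only [Finset.mem_filter, Finset.mem_univ, true_and] at h ⊢
        exact h.1.1.1.1
      · rintro ⟨j, k⟩ h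
        simp only [Finset.mem_filter, Finset.mem_univ, true_and, not_lt,
          Fin.lt_def, Fin.le_def, Fin.ext_iff, and_true] at h ⊢
        omega
      · rintro ⟨m, j, k⟩ h
        simp only [Finset.mem_filter, Finset.mem_univ, true_and] at h
        simp [h.2]
      · rintro ⟨j, k⟩ h; rfl
      · rintro ⟨m, j, k⟩ h
        simp only [Finset.mem_filter, Finset.mem_univ, true_and] at h
        obtain ⟨⟨⟨⟨h1, -⟩, -⟩, -⟩, h2⟩ := h
        subst h2
        rw [lamExt, if_pos le_rfl]
    · refine Finset.prod_nbij' (fun q => (q.2.1, q.2.2, q.1))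
        (fun t => (t.2.2, t.1, t.2.1)) ?_ ?_ ?_ ?_ ?_
      · rintro ⟨m, j, k⟩ h
        simp only [Finset.mem_filter, Finset.mem_univ, true_and, not_lt,
          Fin.lt_def, Fin.le_def, Fin.ext_iff, and_true] at h ⊢
        omega
      · rintro ⟨j, k, m⟩ h
        simp only [Finset.mem_filter, Finset.mem_univ, true_and, not_lt,
          Fin.lt_def, Fin.le_def, Fin.ext_iff, and_true] at h ⊢
        omega
      · rintro ⟨m, j, k⟩ _; rfl
      · rintro ⟨j, k, m⟩ _; rfl
      · rintro ⟨m, j, k⟩ h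
        simp only [Finset.mem_filter, Finset.mem_univ, true_and] at h
        rw [lamExt, if_neg (by
          simp only [Finset.mem_filter, Finset.mem_univ, true_and, not_lt, not_le,
            Fin.lt_def, Fin.le_def, Fin.ext_iff, and_true] at h ⊢
          omega)]
        try rfl
  simp only [sigmaLam, uc, hs, mul_zero, zero_mul, zero_add, add_zero, zero_sub, sub_zero,
    h02, mul_one, one_mul, zpow_zero, Finset.prod_const_one]
  rw [hM, hA]
  have hT : ∀ t ∈ Finset.univ.filter
      (fun t : Fin n × Fin n × Fin n => t.1 < t.2.1 ∧ t.2.1 < t.2.2),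
      lam t.1 t.2.1 t.2.2 ^ (vc s t.2.1 t.2.2 * r.u t.1) *
        lam t.2.1 t.1 t.2.2 ^ (vc s t.1 t.2.2 * r.u t.2.1) =
      (lam t.1 t.2.1 t.2.2 ^ (r.u t.2.2 * vc s t.1 t.2.1) *
        lam t.2.1 t.1 t.2.2 ^ (r.u t.2.2 * -vc s t.1 t.2.1)) *
      (lam t.1 t.2.1 t.2.2 ^ (vc s t.2.1 t.2.2 * r.u t.1) *
        (lam t.2.1 t.1 t.2.2 ^ (vc s t.1 t.2.2 * r.u t.2.1) *
          ((lam t.1 t.2.1 t.2.2)⁻¹ * lam t.2.1 t.1 t.2.2) ^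
            (vc s t.1 t.2.1 * r.u t.2.2))) := by
    intro t _
    exact circle_aux _ _ _ _ _ _
  have hP : ∀ p ∈ Finset.univ.filter (fun p : Fin n × Fin n => p.1 < p.2),
      lam p.1 p.1 p.2 ^ (vc s p.1 p.2 * r.u p.1) *
        lam p.2 p.1 p.2 ^ (r.u p.2 * vc s p.1 p.2) =
      lam p.1 p.1 p.2 ^ (vc s p.1 p.2 * r.u p.1) *
        lam p.2 p.1 p.2 ^ (vc s p.1 p.2 * r.u p.2) := by
    intro p _
    rw [mul_comm (r.u p.2) (vc s p.1 p.2)]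
  rw [Finset.prod_congr rfl hT, Finset.prod_congr rfl hP]
  rw [Finset.prod_mul_distrib, Finset.prod_mul_distrib, Finset.prod_mul_distrib,
    Finset.prod_mul_distrib, Finset.prod_mul_distrib]
  ac_rfl

/-- a central element `s` is `σ_λ`-regular iff
`∏_{j<k} λ_{i,jk}^{s_{jk}} = 1` for every `i`. -/
theorem central_sigmaLam_regular_iff (n : ℕ) (hn : 2 ≤ n)
    (lam : Fin n → Fin n → Fin n → Circle) (s : G n) (hs : ∀ i, s.u i = 0) :
    (∀ r : G n, sigmaLam lam s r = sigmaLam lam r s) ↔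
      ∀ i : Fin n,
        ∏ p ∈ Finset.univ.filter (fun p : Fin n × Fin n => p.1 < p.2),
          lamExt lam i p.1 p.2 ^ vc s p.1 p.2 = 1 := by
  constructor
  · intro h i
    have hk := key_eq lam s hs (uE i)
    rw [← h (uE i)] at hk
    have h2 := left_eq_mul.mp hk
    rw [Finset.prod_eq_single i (fun m _ hm => by simp [uE, hm]) (by simp)] at h2
    simpa [uE] using h2
  · intro h r
    rw [key_eq lam s hs r]
    simp [h]

end FreeNilp
end

section
/- Let n ≥ 2, let t_{i,jk} ∈ [0,1) for 1 ≤ i ≤ n and 1 ≤ j < k ≤ n, set λ_{i,jk} := e^{2πi t_{i,jk}}, and let T : ℝ^{n(n−1)/2} → ℝⁿ be the linear map with (T x)_i = ∑_{1≤j<k≤n} t_{i,jk} x_{jk}. Then the following are equivalent: (i) the identity is the only σ_λ-regular central element of G(n); (ii) T⁻¹(ℤⁿ) ∩ ℤ^{n(n−1)/2} = {0}; (iii) T(ℤ^{n(n−1)/2} ∖ {0}) ∩ ℤⁿ = ∅. -/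
open scoped BigOperators

/-!
For a central element `s`, the relation `λ_{k,ij} = λ_{i,jk}⁻¹ λ_{j,ik}` makes the defect of
symmetry `σ_λ(r, s) σ_λ(s, r)⁻¹` collapse to `∏_{m, j<k} λ_{m,jk}^{r_m s_{jk}}`, that is, to
`exp (2πi ⟨r, T s⟩)`. Hence `s` is `σ_λ`-regular iff `⟨r, T s⟩ ∈ ℤ` for every `r ∈ ℤⁿ`, i.e. iff
`T s ∈ ℤⁿ`; and (ii) ⇔ (iii) is contraposition.
-/

open Finset

theorem prod_prod_filter_lt {α M : Type*} [Fintype α] [LinearOrder α]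
    [CommMonoid M] (f : α → α → α → M) :
    ∏ m, ∏ p ∈ univ.filter (fun p : α × α => p.1 < p.2), f m p.1 p.2 =
      (∏ q ∈ univ.filter (fun q : α × α × α => q.1 < q.2.1 ∧ q.2.1 < q.2.2),
          f q.1 q.2.1 q.2.2 * f q.2.1 q.1 q.2.2 * f q.2.2 q.1 q.2.1) *
        ∏ p ∈ univ.filter (fun p : α × α => p.1 < p.2), f p.1 p.1 p.2 * f p.2 p.1 p.2 := by
  simp only [prod_filter, Fintype.prod_prod_type, prod_mul_distrib]
  have by_position : ∀ m j k : α, (if j < k then f m j k else 1) =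
      (if m < j ∧ j < k then f m j k else 1) * (if m = j ∧ j < k then f m j k else 1) *
        (if j < m ∧ m < k then f m j k else 1) * (if m = k ∧ j < k then f m j k else 1) *
          (if j < k ∧ k < m then f m j k else 1) := by
    grind
  have diag_left : ∏ m, ∏ j, ∏ k, (if m = j ∧ j < k then f m j k else 1) =
      ∏ j, ∏ k, if j < k then f j j k else 1 :=
    prod_congr rfl fun m _ => by
      rw [Fintype.prod_eq_single m fun j hj => prod_eq_one fun k _ => if_neg fun h => hj h.1.symm]
      simp
  have diag_right : ∏ m, ∏ j, ∏ k, (if m = k ∧ j < k then f m j k else 1) =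
      ∏ j, ∏ k, if j < k then f k j k else 1 := by
    rw [prod_comm]
    refine prod_congr rfl fun j _ => prod_congr rfl fun m _ => ?_
    rw [Fintype.prod_eq_single m fun k hk => if_neg fun h => hk h.1.symm]
    simp
  have middle : ∏ m, ∏ j, ∏ k, (if j < m ∧ m < k then f m j k else 1) =
      ∏ i, ∏ j, ∏ k, if i < j ∧ j < k then f j i k else 1 := prod_comm
  have above : ∏ m, ∏ j, ∏ k, (if j < k ∧ k < m then f m j k else 1) =
      ∏ i, ∏ j, ∏ k, if i < j ∧ j < k then f k i j else 1 := by
    rw [prod_comm]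
    exact prod_congr rfl fun _ _ => prod_comm
  calc ∏ m, ∏ j, ∏ k, (if j < k then f m j k else 1)
      = ∏ m, ∏ j, ∏ k, ((if m < j ∧ j < k then f m j k else 1) *
          (if m = j ∧ j < k then f m j k else 1) * (if j < m ∧ m < k then f m j k else 1) *
          (if m = k ∧ j < k then f m j k else 1) * (if j < k ∧ k < m then f m j k else 1)) := by
        simp only [by_position]
    _ = _ := by
        simp only [prod_mul_distrib, diag_left, diag_right, middle, above]
        ac_rfl

theorem Circle.prod_exp {ι : Type*} (s : Finset ι) (f : ι → ℝ) :
    ∏ i ∈ s, Circle.exp (f i) = Circle.exp (∑ i ∈ s, f i) :=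
  (map_sum Circle.expHom f s).symm

namespace FreeNilp

section

variable {n : ℕ} (lam : Fin n → Fin n → Fin n → Circle)

theorem vc_pair (s : G n) (p : PairIdx n) : vc s p.1.1 p.1.2 = s.v p := dif_pos p.2

theorem sigmaLam_central_right {s : G n} (hs : ∀ i, s.u i = 0) (r : G n) :
    sigmaLam lam r s =
      (∏ q ∈ univ.filter (fun q : Fin n × Fin n × Fin n => q.1 < q.2.1 ∧ q.2.1 < q.2.2),
        lam q.1 q.2.1 q.2.2 ^ (r.u q.1 * vc s q.2.1 q.2.2) *
          lam q.2.1 q.1 q.2.2 ^ (r.u q.2.1 * vc s q.1 q.2.2)) *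
      ∏ p ∈ univ.filter (fun p : Fin n × Fin n => p.1 < p.2),
        lam p.1 p.1 p.2 ^ (r.u p.1 * vc s p.1 p.2) * lam p.2 p.1 p.2 ^ (r.u p.2 * vc s p.1 p.2) := by
  simp [sigmaLam, uc, hs, mul_comm]

theorem sigmaLam_central_left
    (hrel : ∀ i j k : Fin n, i < j → j < k → lam k i j = (lam i j k)⁻¹ * lam j i k)
    {s : G n} (hs : ∀ i, s.u i = 0) (r : G n) :
    sigmaLam lam s r =
      ∏ q ∈ univ.filter (fun q : Fin n × Fin n × Fin n => q.1 < q.2.1 ∧ q.2.1 < q.2.2),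
        (lam q.2.2 q.1 q.2.1 ^ (r.u q.2.2 * vc s q.1 q.2.1))⁻¹ := by
  simp only [sigmaLam, uc, hs, mul_zero, zero_mul, zero_add, zero_sub, Int.zero_ediv, zpow_zero,
    mul_one, Finset.prod_const_one]
  refine prod_congr rfl fun q hq => ?_
  rw [mem_filter] at hq
  rw [hrel _ _ _ hq.2.1 hq.2.2, ← zpow_neg, mul_zpow, inv_zpow', neg_neg, mul_neg]

theorem sigmaLam_mul_inv_central
    (hrel : ∀ i j k : Fin n, i < j → j < k → lam k i j = (lam i j k)⁻¹ * lam j i k)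
    {s : G n} (hs : ∀ i, s.u i = 0) (r : G n) :
    sigmaLam lam r s * (sigmaLam lam s r)⁻¹ =
      ∏ m, ∏ p : PairIdx n, lam m p.1.1 p.1.2 ^ (r.u m * s.v p) := by
  have to_subtype : ∀ m, ∏ p ∈ univ.filter (fun p : Fin n × Fin n => p.1 < p.2),
      lam m p.1 p.2 ^ (r.u m * vc s p.1 p.2) =
        ∏ p : PairIdx n, lam m p.1.1 p.1.2 ^ (r.u m * s.v p) := fun m => by
    simp only [← vc_pair]
    exact prod_subtype _ (by simp) _
  simp only [← to_subtype]
  rw [prod_prod_filter_lt (fun m j k => lam m j k ^ (r.u m * vc s j k)),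
    sigmaLam_central_right lam hs, sigmaLam_central_left lam hrel hs, prod_inv_distrib, inv_inv]
  simp only [prod_mul_distrib]
  ac_rfl

theorem sigmaLam_mul_inv_central_eq_exp (t : Fin n → Fin n → Fin n → ℝ)
    (hlam : ∀ i j k : Fin n, lam i j k = Circle.exp (2 * Real.pi * t i j k))
    (hrel : ∀ i j k : Fin n, i < j → j < k → lam k i j = (lam i j k)⁻¹ * lam j i k)
    {s : G n} (hs : ∀ i, s.u i = 0) (r : G n) :
    sigmaLam lam r s * (sigmaLam lam s r)⁻¹ =
      Circle.exp (2 * Real.pi * ∑ m, r.u m * ∑ p : PairIdx n, t m p.1.1 p.1.2 * s.v p) := by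
  simp only [sigmaLam_mul_inv_central lam hrel hs, mul_sum, ← Circle.prod_exp, hlam,
    ← Circle.exp_intCast_mul]
  refine prod_congr rfl fun m _ => prod_congr rfl fun p _ => congrArg Circle.exp ?_
  push_cast
  ring

theorem sigmaLam_comm_iff_of_central (t : Fin n → Fin n → Fin n → ℝ)
    (hlam : ∀ i j k : Fin n, lam i j k = Circle.exp (2 * Real.pi * t i j k))
    (hrel : ∀ i j k : Fin n, i < j → j < k → lam k i j = (lam i j k)⁻¹ * lam j i k)
    {s : G n} (hs : ∀ i, s.u i = 0) :
    (∀ r : G n, sigmaLam lam s r = sigmaLam lam r s) ↔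
      ∀ i : Fin n, ∃ m : ℤ, ∑ p : PairIdx n, t i p.1.1 p.1.2 * (s.v p : ℝ) = m := by
  have key := sigmaLam_mul_inv_central_eq_exp lam t hlam hrel hs
  constructor
  · intro hcomm i
    have h := key (uE i)
    rw [mul_inv_eq_one.mpr (hcomm _).symm] at h
    simp only [uE, Int.cast_ite, Int.cast_one, Int.cast_zero, ite_mul, one_mul, zero_mul,
      sum_ite_eq', mem_univ, if_true] at h
    obtain ⟨m, hm⟩ := Circle.exp_eq_one.mp h.symm
    exact ⟨m, (mul_right_inj' Real.two_pi_pos.ne').mp (hm.trans (mul_comm _ _))⟩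
  · intro hint r
    choose k hk using hint
    have h := key r
    simp only [hk] at h
    refine (mul_inv_eq_one.mp ?_).symm
    rw [h]
    exact_mod_cast Circle.exp_two_pi_mul_int (∑ m, r.u m * k m)

end

theorem simplicity_matrix_criterion_general (n : ℕ)
    (t : Fin n → Fin n → Fin n → ℝ)
    (lam : Fin n → Fin n → Fin n → Circle)
    (hlam : ∀ i j k : Fin n, lam i j k = Circle.exp (2 * Real.pi * t i j k))
    (hrel : ∀ i j k : Fin n, i < j → j < k → lam k i j = (lam i j k)⁻¹ * lam j i k) :
    ((∀ s : G n, (∀ i, s.u i = 0) →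
        (∀ r : G n, sigmaLam lam s r = sigmaLam lam r s) → s = 1) ↔
      ∀ x : PairIdx n → ℤ,
        (∀ i : Fin n, ∃ m : ℤ,
          ∑ p : PairIdx n, t i p.1.1 p.1.2 * (x p : ℝ) = (m : ℝ)) → x = 0) ∧
    ((∀ x : PairIdx n → ℤ,
        (∀ i : Fin n, ∃ m : ℤ,
          ∑ p : PairIdx n, t i p.1.1 p.1.2 * (x p : ℝ) = (m : ℝ)) → x = 0) ↔
      ∀ x : PairIdx n → ℤ, x ≠ 0 →
        ¬ ∀ i : Fin n, ∃ m : ℤ,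
            ∑ p : PairIdx n, t i p.1.1 p.1.2 * (x p : ℝ) = (m : ℝ)) := by
  refine ⟨⟨fun hreg x hx => ?_, fun hcrit s hs hcomm => ?_⟩,
    forall_congr' fun _ => not_imp_not.symm⟩
  · have h := hreg ⟨0, x⟩ (fun _ => rfl)
      ((sigmaLam_comm_iff_of_central lam t hlam hrel fun _ => rfl).mpr hx)
    exact congrArg G.v h
  · have hv := hcrit s.v ((sigmaLam_comm_iff_of_central lam t hlam hrel hs).mp hcomm)
    exact G.ext (funext hs) hv

/-- the matrix criterion: triviality of the `σ_λ`-regular central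
elements is equivalent to `T⁻¹(ℤⁿ) ∩ ℤ^{n(n-1)/2} = {0}`, and to
`T(ℤ^{n(n-1)/2} ∖ {0}) ∩ ℤⁿ = ∅`. -/
theorem simplicity_matrix_criterion (n : ℕ) (hn : 2 ≤ n)
    (t : Fin n → Fin n → Fin n → ℝ)
    (ht : ∀ i j k : Fin n, j < k → t i j k ∈ Set.Ico (0 : ℝ) 1)
    (lam : Fin n → Fin n → Fin n → Circle)
    (hlam : ∀ i j k : Fin n, lam i j k = Circle.exp (2 * Real.pi * t i j k))
    (hrel : ∀ i j k : Fin n, i < j → j < k → lam k i j = (lam i j k)⁻¹ * lam j i k) :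
    ((∀ s : G n, (∀ i, s.u i = 0) →
        (∀ r : G n, sigmaLam lam s r = sigmaLam lam r s) → s = 1) ↔
      ∀ x : PairIdx n → ℤ,
        (∀ i : Fin n, ∃ m : ℤ,
          ∑ p : PairIdx n, t i p.1.1 p.1.2 * (x p : ℝ) = (m : ℝ)) → x = 0) ∧
    ((∀ x : PairIdx n → ℤ,
        (∀ i : Fin n, ∃ m : ℤ,
          ∑ p : PairIdx n, t i p.1.1 p.1.2 * (x p : ℝ) = (m : ℝ)) → x = 0) ↔
      ∀ x : PairIdx n → ℤ, x ≠ 0 →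
        ¬ ∀ i : Fin n, ∃ m : ℤ,
            ∑ p : PairIdx n, t i p.1.1 p.1.2 * (x p : ℝ) = (m : ℝ)) :=
  simplicity_matrix_criterion_general n t lam hlam hrel

end FreeNilp
end

section
/- Let n ≥ 2, let t_{i,jk} ∈ [0,1) for 1 ≤ i ≤ n and 1 ≤ j < k ≤ n, and set λ_{i,jk} := e^{2πi t_{i,jk}}. Suppose there exist indices 1 ≤ j < k ≤ n such that t_{i,jk} ∈ ℚ for every 1 ≤ i ≤ n. Then G(n) contains a nontrivial σ_λ-regular central element: if q is a positive integer that is a common denominator of t_{1,jk}, …, t_{n,jk} (e.g. the least common multiple of their denominators), then the central element q·v_{jk} (the element with (j,k)-coordinate q and all other coordinates 0) is σ_λ-regular. -/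
open scoped BigOperators

namespace FreeNilp

/-! Both `σ_λ(q·v_{jk}, r)` and `σ_λ(r, q·v_{jk})` equal `1`. Every factor in them is a power
of some `λ_{i,jk}` with exponent divisible by `q`, except for the pairs `λ_{j,kb}^x λ_{k,jb}^{-x}`,
which the relation `λ_{b,jk} = λ_{j,kb}⁻¹ λ_{k,jb}` turns into `λ_{b,jk}^{-x}` with `q ∣ x`.
Rationality of the column with denominator `q` makes every `λ_{i,jk}` a `q`-th root of unity. -/

lemma _root_.Circle.exp_two_pi_mul_int_div_pow_self (m : ℤ) {q : ℕ} (hq : q ≠ 0) :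
    Circle.exp (2 * Real.pi * (m / q)) ^ q = 1 := by
  rw [← Circle.exp_natCast_mul, ← Circle.exp_two_pi_mul_int m]
  congr 1
  field_simp

/-- The central element `c·v_{jk}`. -/
def scaledVE {n : ℕ} (c : ℤ) (j k : Fin n) : G n :=
  ⟨fun _ => 0, fun p => if p.1 = (j, k) then c else 0⟩

section scaledVE

variable {n : ℕ} {c : ℤ} {j k : Fin n}

@[simp] lemma uc_scaledVE (i : Fin n) : uc (scaledVE c j k) i = 0 := rfl

lemma vc_scaledVE (hjk : j < k) (a b : Fin n) :
    vc (scaledVE c j k) a b = if (a, b) = (j, k) then c else 0 := by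
  by_cases hab : a < b
  · simp only [vc, dif_pos hab]
    rfl
  · rw [vc, dif_neg hab, if_neg]
    rintro ⟨rfl, rfl⟩
    exact hab hjk

lemma scaledVE_ne_one (hjk : j < k) (hc : c ≠ 0) : scaledVE c j k ≠ 1 := by
  intro h
  have := congrArg (fun r : G n => r.v ⟨(j, k), hjk⟩) h
  exact hc (by simpa [scaledVE] using this)

lemma zpow_vc_scaledVE_mul_eq_one {M : Type*} [Group M] {lam : Fin n → Fin n → Fin n → M}
    (hjk : j < k) (hcol : ∀ i, lam i j k ^ c = 1) (i a b : Fin n) (m : ℤ) :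
    lam i a b ^ (vc (scaledVE c j k) a b * m) = 1 := by
  rw [vc_scaledVE hjk]
  split_ifs with hab
  · obtain ⟨rfl, rfl⟩ := Prod.mk.inj hab
    rw [zpow_mul, hcol, one_zpow]
  · rw [zero_mul, zpow_zero]

variable {lam : Fin n → Fin n → Fin n → Circle}

lemma sigmaLam_scaledVE_left (hjk : j < k) (hcol : ∀ i, lam i j k ^ c = 1)
    (hrel : ∀ a b d : Fin n, a < b → b < d → lam d a b = (lam a b d)⁻¹ * lam b a d)
    (r : G n) : sigmaLam lam (scaledVE c j k) r = 1 := by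
  have hcol' := zpow_vc_scaledVE_mul_eq_one hjk hcol
  rw [sigmaLam, Finset.prod_eq_one, Finset.prod_eq_one, one_mul]
  · intro p _
    simp
  · rintro ⟨i, a, b⟩ hiab
    obtain ⟨hia, hab⟩ := (Finset.mem_filter.mp hiab).2
    have hswap : lam a i b = lam i a b * lam b i a := by
      rw [hrel i a b hia hab]
      group
    simp only [uc_scaledVE, mul_zero, zero_add, zero_sub, mul_neg]
    rw [hswap, mul_zpow, zpow_neg, zpow_neg, mul_inv_cancel_left, mul_comm (uc r b),
      hcol', inv_one]

lemma sigmaLam_scaledVE_right (hjk : j < k) (hcol : ∀ i, lam i j k ^ c = 1) (r : G n) :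
    sigmaLam lam r (scaledVE c j k) = 1 := by
  have hcol' := zpow_vc_scaledVE_mul_eq_one hjk hcol
  rw [sigmaLam, Finset.prod_eq_one, Finset.prod_eq_one, one_mul]
  · rintro ⟨a, b⟩ -
    simp only [uc_scaledVE, mul_zero, zero_mul, add_zero, Int.zero_ediv]
    rw [mul_comm (uc r _), hcol', hcol', one_mul]
  · rintro ⟨i, a, b⟩ -
    simp only [uc_scaledVE, zero_mul, add_zero]
    rw [hcol', hcol', one_mul]

end scaledVE

theorem nontrivial_regular_of_rational_column_general (n : ℕ)
    (t : Fin n → Fin n → Fin n → ℝ)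
    (lam : Fin n → Fin n → Fin n → Circle)
    (hlam : ∀ i j k : Fin n, lam i j k = Circle.exp (2 * Real.pi * t i j k))
    (hrel : ∀ i j k : Fin n, i < j → j < k → lam k i j = (lam i j k)⁻¹ * lam j i k)
    (j k : Fin n) (hjk : j < k) (q : ℕ) (hq : 0 < q)
    (hden : ∀ i : Fin n, ∃ m : ℤ, t i j k = (m : ℝ) / (q : ℝ)) :
    (⟨fun _ => 0, fun p => if p.1 = (j, k) then (q : ℤ) else 0⟩ : G n) ≠ 1 ∧
    ∀ r : G n,
      sigmaLam lam
        (⟨fun _ => 0, fun p => if p.1 = (j, k) then (q : ℤ) else 0⟩ : G n) r =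
      sigmaLam lam r
        (⟨fun _ => 0, fun p => if p.1 = (j, k) then (q : ℤ) else 0⟩ : G n) := by
  have hcol : ∀ i, lam i j k ^ (q : ℤ) = 1 := fun i => by
    obtain ⟨m, hm⟩ := hden i
    rw [zpow_natCast, hlam, hm, Circle.exp_two_pi_mul_int_div_pow_self m hq.ne']
  refine ⟨scaledVE_ne_one hjk (by exact_mod_cast hq.ne'), fun r => ?_⟩
  exact (sigmaLam_scaledVE_left hjk hcol hrel r).trans (sigmaLam_scaledVE_right hjk hcol r).symm

/-- if all entries `t_{i,jk}` of a column `(j,k)` are rational with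
common denominator `q`, then the nontrivial central element `q·v_{jk}` is
`σ_λ`-regular. -/
theorem nontrivial_regular_of_rational_column (n : ℕ) (hn : 2 ≤ n)
    (t : Fin n → Fin n → Fin n → ℝ)
    (ht : ∀ i j k : Fin n, j < k → t i j k ∈ Set.Ico (0 : ℝ) 1)
    (lam : Fin n → Fin n → Fin n → Circle)
    (hlam : ∀ i j k : Fin n, lam i j k = Circle.exp (2 * Real.pi * t i j k))
    (hrel : ∀ i j k : Fin n, i < j → j < k → lam k i j = (lam i j k)⁻¹ * lam j i k)
    (j k : Fin n) (hjk : j < k) (q : ℕ) (hq : 0 < q)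
    (hden : ∀ i : Fin n, ∃ m : ℤ, t i j k = (m : ℝ) / (q : ℝ)) :
    (⟨fun _ => 0, fun p => if p.1 = (j, k) then (q : ℤ) else 0⟩ : G n) ≠ 1 ∧
    ∀ r : G n,
      sigmaLam lam
        (⟨fun _ => 0, fun p => if p.1 = (j, k) then (q : ℤ) else 0⟩ : G n) r =
      sigmaLam lam r
        (⟨fun _ => 0, fun p => if p.1 = (j, k) then (q : ℤ) else 0⟩ : G n) :=
  nontrivial_regular_of_rational_column_general n t lam hlam hrel j k hjk q hq hden

end FreeNilp
end
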